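/- arXiv:1904.05718 — 12 statements merged into one kernel-verified Lean document; each statement's English description precedes it below -/
import Mathlib

section
/- Let D be a nonempty closed convex subset of a real Hilbert space H, T : D → D nonexpansive, and for ε > 0 let F(ε, y) denote the unique point x ∈ D satisfying x = (ε/(1+ε))·y + (1/(1+ε))·T(x). Then for each fixed ε > 0, the map y ↦ F(ε, y) is firmly nonexpansive on D, i.e., ‖F(ε,x) - F(ε,y)‖² + ‖(x - F(ε,x)) - (y - F(ε,y))‖² ≤ ‖x - y‖² for all x, y ∈ D. -/
open Set RealInnerProductSpace

theorem stmt_1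
    {H : Type*} [NormedAddCommGroup H] [InnerProductSpace ℝ H] [CompleteSpace H]
    (D : Set H) (hD : D.Nonempty) (hDc : IsClosed D) (hDconv : Convex ℝ D)
    (T : H → H) (hTD : ∀ x ∈ D, T x ∈ D)
    (hT : ∀ x ∈ D, ∀ y ∈ D, ‖T x - T y‖ ≤ ‖x - y‖)
    (F : ℝ → H → H)
    (hFD : ∀ ε > (0:ℝ), ∀ y ∈ D, F ε y ∈ D)
    (hF : ∀ ε > (0:ℝ), ∀ y ∈ D, ε • F ε y + (F ε y - T (F ε y)) = ε • y)
    (ε : ℝ) (hε : 0 < ε) (x : H) (hx : x ∈ D) (y : H) (hy : y ∈ D) :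
    ‖F ε x - F ε y‖ ^ 2 + ‖(x - F ε x) - (y - F ε y)‖ ^ 2 ≤ ‖x - y‖ ^ 2 := by
  set u := F ε x with hu
  set v := F ε y with hv
  have huD : u ∈ D := hFD ε hε x hx
  have hvD : v ∈ D := hFD ε hε y hy
  set a := u - v with ha
  set b := (x - u) - (y - v) with hb
  have hεb : ε • b = a - (T u - T v) := by
    have h1 := hF ε hε x hx
    have h2 := hF ε hε y hy
    simp only [← hu, ← hv] at h1 h2
    have e1 : ε • x - ε • u = u - T u := by
      rw [← h1]; abel
    have e2 : ε • y - ε • v = v - T v := by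
      rw [← h2]; abel
    have e3 : ε • b = (ε • x - ε • u) - (ε • y - ε • v) := by
      rw [hb]; module
    rw [e3, e1, e2, ha]; abel
  have hinner : 0 ≤ ⟪a, b⟫ := by
    have h3 : ε * ⟪a, b⟫ = ‖a‖ ^ 2 - ⟪a, T u - T v⟫ := by
      rw [← real_inner_smul_right, hεb, inner_sub_right, real_inner_self_eq_norm_sq]
    have h4 : ⟪a, T u - T v⟫ ≤ ‖a‖ ^ 2 := by
      calc ⟪a, T u - T v⟫ ≤ ‖a‖ * ‖T u - T v‖ := real_inner_le_norm _ _
        _ ≤ ‖a‖ * ‖u - v‖ := by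
            exact mul_le_mul_of_nonneg_left (hT u huD v hvD) (norm_nonneg _)
        _ = ‖a‖ ^ 2 := by rw [← ha]; ring
    nlinarith
  have hxy : x - y = a + b := by rw [ha, hb]; abel
  have : ‖x - y‖ ^ 2 = ‖a‖ ^ 2 + 2 * ⟪a, b⟫ + ‖b‖ ^ 2 := by
    rw [hxy, ← real_inner_self_eq_norm_sq, inner_add_add_self,
      real_inner_self_eq_norm_sq, real_inner_self_eq_norm_sq, real_inner_comm b a]
    ring
  rw [this]
  have hA : ‖F ε x - F ε y‖ ^ 2 = ‖a‖ ^ 2 := by rw [ha, hu, hv]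
  have hB : ‖(x - F ε x) - (y - F ε y)‖ ^ 2 = ‖b‖ ^ 2 := by rw [hb, hu, hv]
  rw [hA, hB]; linarith
end

section
/- Let D be a nonempty closed convex subset of a real Hilbert space H, T : D → D nonexpansive with Fix T ≠ ∅, and F(ε, y) defined as the unique solution of ε·x + (x - T(x)) = ε·y in D. Then for every ε > 0, every y ∈ D, and every x* ∈ Fix T: ‖y - F(ε, y)‖² + ‖F(ε, y) - x*‖² ≤ ‖y - x*‖². -/
open Set RealInnerProductSpace

theorem stmt_2
    {H : Type*} [NormedAddCommGroup H] [InnerProductSpace ℝ H] [CompleteSpace H]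
    (D : Set H) (hD : D.Nonempty) (hDc : IsClosed D) (hDconv : Convex ℝ D)
    (T : H → H) (hTD : ∀ x ∈ D, T x ∈ D)
    (hT : ∀ x ∈ D, ∀ y ∈ D, ‖T x - T y‖ ≤ ‖x - y‖)
    (F : ℝ → H → H)
    (hFD : ∀ ε > (0:ℝ), ∀ y ∈ D, F ε y ∈ D)
    (hF : ∀ ε > (0:ℝ), ∀ y ∈ D, ε • F ε y + (F ε y - T (F ε y)) = ε • y)
    (ε : ℝ) (hε : 0 < ε) (y : H) (hy : y ∈ D)
    (xs : H) (hxs : xs ∈ D) (hfix : T xs = xs) :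
    ‖y - F ε y‖ ^ 2 + ‖F ε y - xs‖ ^ 2 ≤ ‖y - xs‖ ^ 2 := by
  set z := F ε y with hz
  have hzD := hFD ε hε y hy
  have heq := hF ε hε y hy
  have h1 : z - T z = ε • (y - z) := by
    rw [smul_sub]
    have : ε • z + (z - T z) - ε • z = ε • y - ε • z := by rw [heq]
    simpa using this
  have h2 : (0:ℝ) ≤ (inner ℝ (z - T z) (z - xs) : ℝ) := by
    have hle : (inner ℝ (T z - xs) (z - xs) : ℝ) ≤ ‖z - xs‖^2 := by
      calc (inner ℝ (T z - xs) (z - xs) : ℝ) ≤ ‖T z - xs‖ * ‖z - xs‖ := real_inner_le_norm _ _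
        _ ≤ ‖z - xs‖ * ‖z - xs‖ := by
            have h := hT z hzD xs hxs
            rw [hfix] at h
            exact mul_le_mul_of_nonneg_right h (norm_nonneg _)
        _ = ‖z - xs‖^2 := (sq _).symm
    have hsplit : (inner ℝ (z - T z) (z - xs) : ℝ) = ‖z - xs‖^2 - (inner ℝ (T z - xs) (z - xs) : ℝ) := by
      have : z - T z = (z - xs) - (T z - xs) := by abel
      rw [this, inner_sub_left, real_inner_self_eq_norm_sq]
    linarith
  have h3 : (0:ℝ) ≤ (inner ℝ (y - z) (z - xs) : ℝ) := by
    rw [h1, real_inner_smul_left] at h2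
    nlinarith
  have key : ‖y - xs‖^2 = ‖y - z‖^2 + ‖z - xs‖^2 + 2*(inner ℝ (y - z) (z - xs) : ℝ) := by
    have h : y - xs = (y - z) + (z - xs) := by abel
    rw [h, norm_add_sq_real]
    ring
  linarith
end

section
/- Let D be a nonempty closed convex subset of a real Hilbert space H, T : D → D nonexpansive, and F(ε, y) the unique solution in D of ε·x + (x - T(x)) = ε·y. If Fix T = ∅, then for every y ∈ D, ‖F(ε, y)‖ → +∞ as ε → 0⁺. -/
open Set

theorem keylem {H : Type*} [NormedAddCommGroup H] [InnerProductSpace ℝ H]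
    (a b : H) (δ ε : ℝ) (hδ : 0 < δ) (hε : 0 < ε) (hde : δ ≤ ε)
    (K : δ * ‖a‖^2 + ε * ‖b‖^2 ≤ (δ + ε) * inner ℝ a b) :
    ‖b‖ ≤ ‖a‖ ∧ ‖b - a‖^2 ≤ ‖a‖^2 - ‖b‖^2 := by
  have hcs : (inner ℝ a b : ℝ) ≤ ‖a‖ * ‖b‖ := real_inner_le_norm a b
  have hna : (0:ℝ) ≤ ‖a‖ := norm_nonneg a
  have hnb : (0:ℝ) ≤ ‖b‖ := norm_nonneg b
  have hpos0 : (0:ℝ) < δ + ε := by linarith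
  have h1 : δ * ‖a‖^2 + ε * ‖b‖^2 ≤ (δ+ε) * (‖a‖ * ‖b‖) :=
    le_trans K (mul_le_mul_of_nonneg_left hcs hpos0.le)
  have hba : ‖b‖ ≤ ‖a‖ := by
    by_contra h
    push_neg at h
    nlinarith [h1, mul_pos hδ (pow_pos (sub_pos.2 h) 2),
      mul_nonneg (sub_nonneg.2 hde) (mul_nonneg hnb (sub_nonneg.2 h.le))]
  refine ⟨hba, ?_⟩
  have hexp : ‖b - a‖^2 = ‖b‖^2 - 2 * inner ℝ a b + ‖a‖^2 := by
    rw [norm_sub_sq_real]; ring_nf; rw [real_inner_comm]; ring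
  have hsq : ‖b‖^2 ≤ ‖a‖^2 := by nlinarith
  have h2 : ‖b‖^2 ≤ inner ℝ a b := by
    have h3 : (δ+ε) * ‖b‖^2 ≤ (δ+ε) * inner ℝ a b := by nlinarith
    exact le_of_mul_le_mul_left h3 hpos0
  linarith

theorem stmt_3
    {H : Type*} [NormedAddCommGroup H] [InnerProductSpace ℝ H] [CompleteSpace H]
    (D : Set H) (hD : D.Nonempty) (hDc : IsClosed D) (hDconv : Convex ℝ D)
    (T : H → H) (hTD : ∀ x ∈ D, T x ∈ D)
    (hT : ∀ x ∈ D, ∀ y ∈ D, ‖T x - T y‖ ≤ ‖x - y‖)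
    (F : ℝ → H → H)
    (hFD : ∀ ε > (0:ℝ), ∀ y ∈ D, F ε y ∈ D)
    (hF : ∀ ε > (0:ℝ), ∀ y ∈ D, ε • F ε y + (F ε y - T (F ε y)) = ε • y)
    (hempty : {x ∈ D | T x = x} = ∅) (y : H) (hy : y ∈ D) :
    Filter.Tendsto (fun ε => ‖F ε y‖) (nhdsWithin 0 (Set.Ioi (0:ℝ))) Filter.atTop := by
  classical
  set u : ℝ → H := fun ε => F ε y - y with hu
  -- resolvent identity
  have hres : ∀ ε > (0:ℝ), F ε y - T (F ε y) = ε • (y - F ε y) := by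
    intro ε hε
    have h := hF ε hε y hy
    have : F ε y - T (F ε y) = ε • y - ε • F ε y := by
      rw [eq_sub_iff_add_eq]; rw [← h]; abel
    rw [this, smul_sub]
  -- the key inequality
  have hK : ∀ δ > (0:ℝ), ∀ ε > (0:ℝ),
      δ * ‖u δ‖^2 + ε * ‖u ε‖^2 ≤ (δ + ε) * inner ℝ (u δ) (u ε) := by
    intro δ hδ ε hε
    have hxε : F ε y ∈ D := hFD ε hε y hy
    have hxδ : F δ y ∈ D := hFD δ hδ y hy
    have hne : (0:ℝ) ≤ inner ℝ ((F ε y - T (F ε y)) - (F δ y - T (F δ y))) (F ε y - F δ y) := by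
      have h1 : (inner ℝ (T (F ε y) - T (F δ y)) (F ε y - F δ y) : ℝ)
          ≤ ‖F ε y - F δ y‖^2 := by
        calc (inner ℝ (T (F ε y) - T (F δ y)) (F ε y - F δ y) : ℝ)
            ≤ ‖T (F ε y) - T (F δ y)‖ * ‖F ε y - F δ y‖ := real_inner_le_norm _ _
          _ ≤ ‖F ε y - F δ y‖ * ‖F ε y - F δ y‖ :=
              mul_le_mul_of_nonneg_right (hT _ hxε _ hxδ) (norm_nonneg _)
          _ = ‖F ε y - F δ y‖^2 := by ring
      have h2 : (inner ℝ ((F ε y - T (F ε y)) - (F δ y - T (F δ y))) (F ε y - F δ y) : ℝ)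
          = ‖F ε y - F δ y‖^2 - inner ℝ (T (F ε y) - T (F δ y)) (F ε y - F δ y) := by
        have : (F ε y - T (F ε y)) - (F δ y - T (F δ y))
            = (F ε y - F δ y) - (T (F ε y) - T (F δ y)) := by abel
        rw [this, inner_sub_left, real_inner_self_eq_norm_sq]
      linarith
    have h3 : (F ε y - T (F ε y)) - (F δ y - T (F δ y)) = δ • u δ - ε • u ε := by
      rw [hres ε hε, hres δ hδ, hu]
      simp only [smul_sub]
      abel
    have h4 : F ε y - F δ y = u ε - u δ := by simp only [hu]; abel
    rw [h3, h4] at hne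
    have h5 : (inner ℝ (δ • u δ - ε • u ε) (u ε - u δ) : ℝ)
        = (δ + ε) * inner ℝ (u δ) (u ε) - δ * ‖u δ‖^2 - ε * ‖u ε‖^2 := by
      simp only [inner_sub_left, inner_sub_right, real_inner_smul_left,
        real_inner_self_eq_norm_sq]
      rw [real_inner_comm (u ε) (u δ)]
      ring
    rw [h5] at hne
    linarith
  -- monotonicity and Cauchy bound
  have hmono : ∀ δ > (0:ℝ), ∀ ε, δ ≤ ε → ‖u ε‖ ≤ ‖u δ‖ := by
    intro δ hδ ε hde
    exact (keylem (u δ) (u ε) δ ε hδ (lt_of_lt_of_le hδ hde) hde (hK δ hδ ε (lt_of_lt_of_le hδ hde))).1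
  have hcau : ∀ δ > (0:ℝ), ∀ ε, δ ≤ ε → ‖u ε - u δ‖^2 ≤ ‖u δ‖^2 - ‖u ε‖^2 := by
    intro δ hδ ε hde
    exact (keylem (u δ) (u ε) δ ε hδ (lt_of_lt_of_le hδ hde) hde (hK δ hδ ε (lt_of_lt_of_le hδ hde))).2
  -- suppose not tendsto
  by_contra hcon
  rw [Filter.tendsto_atTop] at hcon
  push_neg at hcon
  obtain ⟨M, hM⟩ := hcon
  -- boundedness
  set B : ℝ := M + ‖y‖ with hB
  have hbdd : ∀ ε > (0:ℝ), ‖u ε‖ ≤ B := by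
    intro ε hε
    have hIoo : Ioo (0:ℝ) ε ∈ nhdsWithin 0 (Set.Ioi (0:ℝ)) :=
      Ioo_mem_nhdsGT_of_mem ⟨le_refl 0, hε⟩
    obtain ⟨δ, hδ1, hδ2⟩ := (hM.and_eventually (Filter.eventually_of_mem hIoo (fun x hx => hx))).exists
    have h1 : ‖u ε‖ ≤ ‖u δ‖ := hmono δ hδ2.1 ε hδ2.2.le
    have h2 : ‖u δ‖ ≤ ‖F δ y‖ + ‖y‖ := norm_sub_le _ _
    linarith
  -- sequence
  set e : ℕ → ℝ := fun n => 1 / (n + 1) with he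
  have hepos : ∀ n, 0 < e n := fun n => Nat.one_div_pos_of_nat
  have heanti : ∀ m n : ℕ, m ≤ n → e n ≤ e m := by
    intro m n hmn
    apply one_div_le_one_div_of_le (by positivity)
    have : (m:ℝ) ≤ n := Nat.cast_le.2 hmn
    linarith
  set A : ℕ → ℝ := fun n => ‖u (e n)‖ with hA
  have hAmono : Monotone A := by
    intro m n hmn
    exact hmono (e n) (hepos n) (e m) (heanti m n hmn)
  have hAbdd : BddAbove (Set.range A) := by
    refine ⟨B, ?_⟩
    rintro r ⟨n, rfl⟩
    exact hbdd (e n) (hepos n)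
  have hAconv : ∃ L, Filter.Tendsto A Filter.atTop (nhds L) :=
    ⟨_, tendsto_atTop_ciSup hAmono hAbdd⟩
  obtain ⟨L, hL⟩ := hAconv
  have hA2 : Filter.Tendsto (fun n => (A n)^2) Filter.atTop (nhds (L^2)) := by
    simpa [pow_two] using hL.mul hL
  have hA2c : CauchySeq (fun n => (A n)^2) := hA2.cauchySeq
  -- the sequence of points is Cauchy
  have hxc : CauchySeq (fun n => F (e n) y) := by
    rw [Metric.cauchySeq_iff]
    intro c hc
    obtain ⟨N, hN⟩ := Metric.cauchySeq_iff.1 hA2c (c^2) (by positivity)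
    refine ⟨N, fun m hm n hn => ?_⟩
    rcases le_total m n with hmn | hmn
    · have key := hcau (e n) (hepos n) (e m) (heanti m n hmn)
      have h1 : dist (A n ^ 2) (A m ^ 2) < c^2 := hN n hn m hm
      rw [Real.dist_eq] at h1
      have h2 : ‖u (e m) - u (e n)‖^2 < c^2 := by
        calc ‖u (e m) - u (e n)‖^2 ≤ ‖u (e n)‖^2 - ‖u (e m)‖^2 := key
          _ ≤ |A n ^ 2 - A m ^ 2| := le_abs_self _
          _ < c^2 := h1
      have h3 : ‖u (e m) - u (e n)‖ < c := by
        nlinarith [norm_nonneg (u (e m) - u (e n))]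
      have h4 : F (e m) y - F (e n) y = u (e m) - u (e n) := by simp only [hu]; abel
      rw [dist_eq_norm, h4]
      exact h3
    · have key := hcau (e m) (hepos m) (e n) (heanti n m hmn)
      have h1 : dist (A m ^ 2) (A n ^ 2) < c^2 := hN m hm n hn
      rw [Real.dist_eq] at h1
      have h2 : ‖u (e n) - u (e m)‖^2 < c^2 := by
        calc ‖u (e n) - u (e m)‖^2 ≤ ‖u (e m)‖^2 - ‖u (e n)‖^2 := key
          _ ≤ |A m ^ 2 - A n ^ 2| := le_abs_self _
          _ < c^2 := h1
      have h3 : ‖u (e n) - u (e m)‖ < c := by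
        nlinarith [norm_nonneg (u (e n) - u (e m))]
      have h4 : F (e m) y - F (e n) y = -(u (e n) - u (e m)) := by simp only [hu]; abel
      rw [dist_eq_norm, h4, norm_neg]
      exact h3
  obtain ⟨x, hx⟩ := cauchySeq_tendsto_of_complete hxc
  have hxD : x ∈ D := hDc.mem_of_tendsto hx (Filter.Eventually.of_forall
    (fun n => hFD (e n) (hepos n) y hy))
  -- e n → 0
  have he0 : Filter.Tendsto e Filter.atTop (nhds 0) := tendsto_one_div_add_atTop_nhds_zero_nat
  -- e n • (y - F (e n) y) → 0
  have hsmul0 : Filter.Tendsto (fun n => e n • (y - F (e n) y)) Filter.atTop (nhds 0) := by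
    have hnorm : ∀ n, ‖e n • (y - F (e n) y)‖ ≤ e n * B := by
      intro n
      rw [norm_smul, Real.norm_eq_abs, abs_of_pos (hepos n)]
      have : ‖y - F (e n) y‖ = ‖u (e n)‖ := by rw [hu]; simp [norm_sub_rev]
      rw [this]
      exact mul_le_mul_of_nonneg_left (hbdd (e n) (hepos n)) (hepos n).le
    rw [tendsto_zero_iff_norm_tendsto_zero]
    apply squeeze_zero (fun n => norm_nonneg _) hnorm
    have h := he0.mul_const B
    rw [zero_mul] at h
    exact h
  -- T (F (e n) y) → x
  have hT1 : Filter.Tendsto (fun n => T (F (e n) y)) Filter.atTop (nhds x) := by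
    have heq : ∀ n, T (F (e n) y) = F (e n) y - e n • (y - F (e n) y) := by
      intro n
      have := hres (e n) (hepos n)
      rw [← this]; abel
    simp only [heq]
    simpa using hx.sub hsmul0
  -- T (F (e n) y) → T x
  have hT2 : Filter.Tendsto (fun n => T (F (e n) y)) Filter.atTop (nhds (T x)) := by
    rw [tendsto_iff_norm_sub_tendsto_zero]
    apply squeeze_zero (fun n => norm_nonneg _)
      (fun n => hT _ (hFD (e n) (hepos n) y hy) _ hxD)
    rw [← tendsto_iff_norm_sub_tendsto_zero]
    exact hx
  have hfix : T x = x := tendsto_nhds_unique hT2 hT1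
  have : x ∈ {x ∈ D | T x = x} := ⟨hxD, hfix⟩
  rw [hempty] at this
  exact this
end

section
/- Let D be a nonempty closed convex subset of a real Hilbert space H, T : D → D nonexpansive with Fix T ≠ ∅, and F(ε, y) the unique solution in D of ε·x + (x - T(x)) = ε·y. Then for every y ∈ D, F(ε, y) converges strongly to proj_{Fix T}(y) as ε → 0⁺. -/
open Set

open RealInnerProductSpace
theorem stmt_4
    {H : Type*} [NormedAddCommGroup H] [InnerProductSpace ℝ H] [CompleteSpace H]
    (D : Set H) (hD : D.Nonempty) (hDc : IsClosed D) (hDconv : Convex ℝ D)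
    (T : H → H) (hTD : ∀ x ∈ D, T x ∈ D)
    (hT : ∀ x ∈ D, ∀ y ∈ D, ‖T x - T y‖ ≤ ‖x - y‖)
    (F : ℝ → H → H)
    (hFD : ∀ ε > (0:ℝ), ∀ y ∈ D, F ε y ∈ D)
    (hF : ∀ ε > (0:ℝ), ∀ y ∈ D, ε • F ε y + (F ε y - T (F ε y)) = ε • y)
    (y : H) (hy : y ∈ D)
    (p : H) (hp : p ∈ D) (hpfix : T p = p)
    (hproj : ∀ z ∈ D, T z = z → ‖y - p‖ ≤ ‖y - z‖) :
    Filter.Tendsto (fun ε => F ε y) (nhdsWithin 0 (Set.Ioi (0:ℝ))) (nhds p) := by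
  set l := nhdsWithin (0:ℝ) (Set.Ioi (0:ℝ)) with hl
  haveI hnb : l.NeBot := nhdsGT_neBot 0
  have hx : ∀ ε > (0:ℝ), F ε y ∈ D := fun ε hε => hFD ε hε y hy
  -- the resolvent equation rearranged
  have heq : ∀ ε > (0:ℝ), T (F ε y) - F ε y = ε • (F ε y - y) := by
    intro ε hε
    have h := hF ε hε y hy
    rw [smul_sub, ← h]
    abel
  -- nonexpansiveness in inner product form
  have hne : ∀ a > (0:ℝ), ∀ b > (0:ℝ),
      ⟪T (F a y) - T (F b y), F a y - F b y⟫ ≤ ‖F a y - F b y‖^2 := by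
    intro a ha b hb
    calc ⟪T (F a y) - T (F b y), F a y - F b y⟫
        ≤ ‖T (F a y) - T (F b y)‖ * ‖F a y - F b y‖ := real_inner_le_norm _ _
      _ ≤ ‖F a y - F b y‖ * ‖F a y - F b y‖ :=
          mul_le_mul_of_nonneg_right (hT _ (hx a ha) _ (hx b hb)) (norm_nonneg _)
      _ = ‖F a y - F b y‖^2 := (sq ‖F a y - F b y‖).symm
  -- key inequality against fixed points
  have hkey : ∀ ε > (0:ℝ), ∀ z ∈ D, T z = z →
      ‖F ε y - z‖^2 ≤ ⟪y - z, F ε y - z⟫ := by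
    intro ε hε z hz hzfix
    set x := F ε y with hxdef
    have h1 : ⟪T x - T z, x - z⟫ ≤ ‖x - z‖^2 := by
      calc ⟪T x - T z, x - z⟫ ≤ ‖T x - T z‖ * ‖x - z‖ := real_inner_le_norm _ _
        _ ≤ ‖x - z‖ * ‖x - z‖ :=
            mul_le_mul_of_nonneg_right (hT _ (hx ε hε) _ hz) (norm_nonneg _)
        _ = ‖x - z‖^2 := (sq _).symm
    have h2 : T x - T z = (x - z) + ε • (x - y) := by
      have := heq ε hε
      rw [hzfix]
      rw [sub_eq_iff_eq_add] at this
      rw [this]; abel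
    rw [h2, inner_add_left, real_inner_smul_left, real_inner_self_eq_norm_sq] at h1
    have h3 : ⟪x - y, x - z⟫ ≤ 0 := by nlinarith
    have h4 : (x - z) = (x - y) + (y - z) := by abel
    calc ‖x - z‖^2 = ⟪x - z, x - z⟫ := (real_inner_self_eq_norm_sq _).symm
      _ = ⟪x - y, x - z⟫ + ⟪y - z, x - z⟫ := by rw [h4, inner_add_left]
      _ ≤ ⟪y - z, x - z⟫ := by linarith
  -- boundedness
  have hbp : ∀ ε > (0:ℝ), ‖F ε y - p‖ ≤ ‖y - p‖ := by
    intro ε hε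
    have h1 := hkey ε hε p hp hpfix
    have h2 : ⟪y - p, F ε y - p⟫ ≤ ‖y - p‖ * ‖F ε y - p‖ := real_inner_le_norm _ _
    nlinarith [norm_nonneg (F ε y - p), norm_nonneg (y - p)]
  have hby : ∀ ε > (0:ℝ), ‖F ε y - y‖ ≤ 2 * ‖y - p‖ := by
    intro ε hε
    have h1 : ‖F ε y - y‖ ≤ ‖F ε y - p‖ + ‖p - y‖ := norm_sub_le_norm_sub_add_norm_sub _ _ _
    rw [norm_sub_rev p y] at h1
    have := hbp ε hε
    linarith
  set g : ℝ → ℝ := fun ε => ‖F ε y - y‖^2 with hg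
  have hgb : ∀ ε > (0:ℝ), g ε ≤ (2 * ‖y - p‖)^2 := by
    intro ε hε
    exact pow_le_pow_left₀ (norm_nonneg _) (hby ε hε) 2
  -- the Cauchy-type estimate
  have hCau2 : ∀ a b : ℝ, 0 < a → a ≤ b → ‖F a y - F b y‖^2 ≤ g a - g b := by
    intro a b ha hab
    have hb0 : (0:ℝ) < b := lt_of_lt_of_le ha hab
    have h1 : T (F a y) - T (F b y)
        = (F a y - F b y) + (a • (F a y - y) - b • (F b y - y)) := by
      have e1 := heq a ha
      have e2 := heq b hb0
      rw [sub_eq_iff_eq_add] at e1 e2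
      rw [e1, e2]
      abel
    set u := F a y - y with hu
    set v := F b y - y with hv
    have huv : F a y - F b y = u - v := by rw [hu, hv]; abel
    rw [huv] at h1
    have h2 := hne a ha b hb0
    rw [h1, huv, inner_add_left] at h2
    have h3 : ⟪a • u - b • v, u - v⟫ ≤ 0 := by
      have : ⟪u - v, u - v⟫ = ‖u - v‖^2 := real_inner_self_eq_norm_sq _
      linarith
    have hx1 : ⟪a • u - b • v, u - v⟫
        = a * ⟪u, u⟫ - a * ⟪u, v⟫ - b * ⟪u, v⟫ + b * ⟪v, v⟫ := by
      simp only [inner_sub_left, inner_sub_right, real_inner_smul_left]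
      rw [real_inner_comm v u]
      ring
    rw [hx1] at h3
    have hiuu : ⟪u, u⟫ = ‖u‖^2 := real_inner_self_eq_norm_sq _
    have hivv : ⟪v, v⟫ = ‖v‖^2 := real_inner_self_eq_norm_sq _
    have hnuv : ‖u - v‖^2 = ‖u‖^2 - 2 * ⟪u, v⟫ + ‖v‖^2 := norm_sub_sq_real u v
    have hga : g a = ‖u‖^2 := by rw [hg, hu]
    have hgbv : g b = ‖v‖^2 := by rw [hg, hv]
    rw [huv, hnuv, hga, hgbv]
    rw [hiuu, hivv] at h3
    have hc2 : (0:ℝ) ≤ ‖u‖^2 - 2 * ⟪u, v⟫ + ‖v‖^2 := by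
      rw [← hnuv]; positivity
    rcases eq_or_lt_of_le hab with rfl | hba
    · have huv0 : u = v := rfl
      rw [huv0, hivv]
      linarith
    · nlinarith [h3, hc2, mul_nonneg ha.le hc2,
        mul_nonneg (sub_pos.mpr hba).le hc2]
  -- sup of g on (0,∞)
  set L := sSup (g '' Set.Ioi (0:ℝ)) with hL
  have hbdd : BddAbove (g '' Set.Ioi (0:ℝ)) := by
    refine ⟨(2 * ‖y - p‖)^2, ?_⟩
    rintro _ ⟨a, ha, rfl⟩
    exact hgb a ha
  have hgle : ∀ a > (0:ℝ), g a ≤ L := fun a ha => le_csSup hbdd ⟨a, ha, rfl⟩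
  have hneS : (g '' Set.Ioi (0:ℝ)).Nonempty := ⟨g 1, 1, by norm_num, rfl⟩
  -- Cauchy filter
  have hC : Cauchy (Filter.map (fun ε => F ε y) l) := by
    rw [Metric.cauchy_iff]
    refine ⟨Filter.NeBot.map hnb _, ?_⟩
    intro ε' hε'
    obtain ⟨_, ⟨η, hη, rfl⟩, hgη⟩ := exists_lt_of_lt_csSup hneS
      (show L - ε'^2 < L by nlinarith)
    refine ⟨(fun ε => F ε y) '' Set.Ioc 0 η,
      Filter.image_mem_map (Ioc_mem_nhdsGT_of_mem ⟨le_refl 0, hη⟩), ?_⟩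
    rintro _ ⟨a, ha, rfl⟩ _ ⟨b, hb, rfl⟩
    have key : ∀ s t : ℝ, 0 < s → s ≤ t → t ≤ η → dist (F s y) (F t y) < ε' := by
      intro s t hs hst htη
      have h1 : ‖F s y - F t y‖^2 ≤ g s - g t := hCau2 s t hs hst
      have h2 : g s ≤ L := hgle s hs
      have h3 : g η ≤ g t := by
        have := hCau2 t η (lt_of_lt_of_le hs hst) htη
        nlinarith [sq_nonneg ‖F t y - F η y‖]
      have h4 : ‖F s y - F t y‖^2 < ε'^2 := by nlinarith
      rw [dist_eq_norm]
      nlinarith [norm_nonneg (F s y - F t y)]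
    rcases le_total a b with hab | hab
    · exact key a b ha.1 hab hb.2
    · rw [dist_comm]; exact key b a hb.1 hab ha.2
  obtain ⟨q, hq⟩ := CompleteSpace.complete hC
  have htq : Filter.Tendsto (fun ε => F ε y) l (nhds q) := hq
  -- q ∈ D
  have hqD : q ∈ D := hDc.mem_of_tendsto htq
    (eventually_nhdsWithin_of_forall (fun ε hε => hx ε hε))
  -- T q = q
  have hdiff : Filter.Tendsto (fun ε => F ε y - T (F ε y)) l (nhds 0) := by
    apply squeeze_zero_norm' (a := fun ε => ε * (2 * ‖y - p‖))
    · refine eventually_nhdsWithin_of_forall (fun ε hε => ?_)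
      have := heq ε hε
      have h1 : F ε y - T (F ε y) = ε • (y - F ε y) := by
        have h2 : ε • (y - F ε y) = -(ε • (F ε y - y)) := by
          rw [← smul_neg]; congr 1; abel
        rw [h2, ← this]; abel
      rw [h1, norm_smul, Real.norm_eq_abs, abs_of_pos hε, norm_sub_rev]
      exact mul_le_mul_of_nonneg_left (hby ε hε) (le_of_lt hε)
    · have : Filter.Tendsto (fun ε : ℝ => ε * (2 * ‖y - p‖)) (nhds 0)
          (nhds (0 * (2 * ‖y - p‖))) := (continuous_id.mul continuous_const).tendsto 0
      rw [zero_mul] at this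
      exact this.mono_left nhdsWithin_le_nhds
  have hTx : Filter.Tendsto (fun ε => T (F ε y)) l (nhds q) := by
    have h := htq.sub hdiff
    rw [sub_zero] at h
    convert h using 2 with ε
    abel
  have hTx2 : Filter.Tendsto (fun ε => T (F ε y)) l (nhds (T q)) := by
    have hn : Filter.Tendsto (fun ε => ‖F ε y - q‖) l (nhds 0) := by
      have := (htq.sub (tendsto_const_nhds (x := q))).norm
      simpa using this
    have h0 : Filter.Tendsto (fun ε => T (F ε y) - T q) l (nhds 0) := by
      apply squeeze_zero_norm' (a := fun ε => ‖F ε y - q‖) _ hn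
      exact eventually_nhdsWithin_of_forall (fun ε hε => hT _ (hx ε hε) _ hqD)
    have := h0.add (tendsto_const_nhds (x := T q))
    rw [zero_add] at this
    simpa using this
  have hTqq : T q = q := tendsto_nhds_unique hTx2 hTx
  -- identify q = p
  have hkq : ‖q - p‖^2 ≤ ⟪y - p, q - p⟫ := by
    have e1 : Filter.Tendsto (fun ε => ‖F ε y - p‖^2) l (nhds (‖q - p‖^2)) :=
      ((htq.sub_const p).norm).pow 2
    have e2 : Filter.Tendsto (fun ε => ⟪y - p, F ε y - p⟫) l (nhds ⟪y - p, q - p⟫) :=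
      Filter.Tendsto.inner tendsto_const_nhds (htq.sub_const p)
    exact le_of_tendsto_of_tendsto e1 e2
      (eventually_nhdsWithin_of_forall (fun ε hε => hkey ε hε p hp hpfix))
  have hyq : ‖y - p‖ ≤ ‖y - q‖ := hproj q hqD hTqq
  have hqp : q = p := by
    have hexp : ‖y - q‖^2 = ‖y - p‖^2 - 2 * ⟪y - p, q - p⟫ + ‖q - p‖^2 := by
      have : y - q = (y - p) - (q - p) := by abel
      rw [this, norm_sub_sq_real]
    have hsq : ‖y - p‖^2 ≤ ‖y - q‖^2 := pow_le_pow_left₀ (norm_nonneg _) hyq 2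
    have : ‖q - p‖^2 ≤ 0 := by nlinarith
    have h0 : ‖q - p‖ = 0 := by nlinarith [norm_nonneg (q - p), sq_nonneg ‖q - p‖]
    rw [norm_eq_zero, sub_eq_zero] at h0
    exact h0
  rw [← hqp]
  exact htq
end

section
/- Let D be a nonempty closed convex subset of a real Hilbert space H, T : D → D nonexpansive, and F(ε, y) the unique solution in D of ε·x + (x - T(x)) = ε·y. Then for every y ∈ D, the function ε ↦ ‖y - F(ε, y)‖ is nonincreasing on (0, ∞). -/
open Set RealInnerProductSpace

theorem stmt_5
    {H : Type*} [NormedAddCommGroup H] [InnerProductSpace ℝ H] [CompleteSpace H]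
    (D : Set H) (hD : D.Nonempty) (hDc : IsClosed D) (hDconv : Convex ℝ D)
    (T : H → H) (hTD : ∀ x ∈ D, T x ∈ D)
    (hT : ∀ x ∈ D, ∀ y ∈ D, ‖T x - T y‖ ≤ ‖x - y‖)
    (F : ℝ → H → H)
    (hFD : ∀ ε > (0:ℝ), ∀ y ∈ D, F ε y ∈ D)
    (hF : ∀ ε > (0:ℝ), ∀ y ∈ D, ε • F ε y + (F ε y - T (F ε y)) = ε • y)
    (y : H) (hy : y ∈ D) :
    AntitoneOn (fun ε => ‖y - F ε y‖) (Set.Ioi (0:ℝ)) := by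
  intro a ha b hb hab
  simp only [Set.mem_Ioi] at ha hb
  set u := F a y with hu_def
  set v := F b y with hv_def
  have hu : u ∈ D := hFD a ha y hy
  have hv : v ∈ D := hFD b hb y hy
  set p := y - u with hp_def
  set q := y - v with hq_def
  have hua : u - T u = a • p := by
    have h := hF a ha y hy
    rw [hp_def, smul_sub]
    have := eq_sub_of_add_eq' h
    rw [this]
  have hvb : v - T v = b • q := by
    have h := hF b hb y hy
    rw [hq_def, smul_sub]
    have := eq_sub_of_add_eq' h
    rw [this]
  -- monotonicity of I - T
  have mono : 0 ≤ ⟪(u - T u) - (v - T v), u - v⟫ := by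
    have hT' := hT u hu v hv
    have h1 : ⟪T u - T v, u - v⟫ ≤ ‖u - v‖ * ‖u - v‖ :=
      (real_inner_le_norm _ _).trans (mul_le_mul_of_nonneg_right hT' (norm_nonneg _))
    have h2 : (u - T u) - (v - T v) = (u - v) - (T u - T v) := by abel
    rw [h2, inner_sub_left, real_inner_self_eq_norm_mul_norm]
    linarith
  have huv : u - v = q - p := by rw [hp_def, hq_def]; abel
  rw [hua, hvb, huv] at mono
  have expand : ⟪a • p - b • q, q - p⟫
      = a * ⟪p, q⟫ - a * ⟪p, p⟫ - b * ⟪q, q⟫ + b * ⟪p, q⟫ := by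
    simp only [inner_sub_left, inner_sub_right, real_inner_smul_left,
      real_inner_comm q p]
    ring
  rw [expand] at mono
  have hpp : ⟪p, p⟫ = ‖p‖ * ‖p‖ := real_inner_self_eq_norm_mul_norm p
  have hqq : ⟪q, q⟫ = ‖q‖ * ‖q‖ := real_inner_self_eq_norm_mul_norm q
  have hcs : ⟪p, q⟫ ≤ ‖p‖ * ‖q‖ := real_inner_le_norm p q
  rw [hpp, hqq] at mono
  show ‖q‖ ≤ ‖p‖
  by_contra hlt
  push_neg at hlt
  have h1 : a * ‖p‖ < b * ‖q‖ := by nlinarith [norm_nonneg p, norm_nonneg q]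
  have h2 : 0 < (‖q‖ - ‖p‖) * (b * ‖q‖ - a * ‖p‖) :=
    mul_pos (sub_pos.2 hlt) (sub_pos.2 h1)
  nlinarith [h2, mul_le_mul_of_nonneg_left hcs (by linarith : (0:ℝ) ≤ a + b)]
end

section
/- Let D be a nonempty closed convex subset of a real Hilbert space H, T : D → D nonexpansive, and F(ε, y) the unique solution in D of ε·x + (x - T(x)) = ε·y. Then for all ε₁, ε₂ > 0 and all x ∈ D: ‖F(ε₂, x) - F(ε₁, x)‖ ≤ (|ε₂ - ε₁| / min{ε₁, ε₂}) · ‖x - F(min{ε₁, ε₂}, x)‖. -/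
open Set RealInnerProductSpace

lemma aux_key_stmt7 {H : Type*} [NormedAddCommGroup H] [InnerProductSpace ℝ H]
    (a b : ℝ) (hb : 0 < b) (x xa xb ta tb : H)
    (hne : ‖tb - ta‖ ≤ ‖xb - xa‖)
    (hea : xa - ta = a • (x - xa)) (heb : xb - tb = b • (x - xb)) :
    ‖xb - xa‖ ≤ (|b - a| / b) * ‖x - xa‖ := by
  set u := xb - xa with hu
  have h1 : (0:ℝ) ≤ ⟪u - (tb - ta), u⟫ := by
    rw [inner_sub_left, real_inner_self_eq_norm_sq]
    have h := real_inner_le_norm (tb - ta) u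
    nlinarith [norm_nonneg u]
  have h2 : u - (tb - ta) = (b - a) • (x - xa) - b • u := by
    have h : u - (tb - ta) = (xb - tb) - (xa - ta) := by rw [hu]; abel
    rw [h, hea, heb, hu]
    module
  have h3 : b * ‖u‖^2 ≤ (b - a) * ⟪x - xa, u⟫ := by
    rw [h2, inner_sub_left, real_inner_smul_left, real_inner_smul_left,
      real_inner_self_eq_norm_sq] at h1
    linarith
  have h4 : (b - a) * ⟪x - xa, u⟫ ≤ |b - a| * (‖x - xa‖ * ‖u‖) := by
    calc (b - a) * ⟪x - xa, u⟫ ≤ |(b-a) * ⟪x - xa, u⟫| := le_abs_self _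
    _ = |b-a| * |⟪x - xa, u⟫| := abs_mul _ _
    _ ≤ |b-a| * (‖x - xa‖ * ‖u‖) := by
        gcongr
        exact abs_real_inner_le_norm _ _
  rcases eq_or_lt_of_le (norm_nonneg u) with h0 | h0
  · rw [← h0]; positivity
  · rw [div_mul_eq_mul_div, le_div_iff₀ hb]
    nlinarith [h3.trans h4]

theorem stmt_7
    {H : Type*} [NormedAddCommGroup H] [InnerProductSpace ℝ H] [CompleteSpace H]
    (D : Set H) (hD : D.Nonempty) (hDc : IsClosed D) (hDconv : Convex ℝ D)
    (T : H → H) (hTD : ∀ x ∈ D, T x ∈ D)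
    (hT : ∀ x ∈ D, ∀ y ∈ D, ‖T x - T y‖ ≤ ‖x - y‖)
    (F : ℝ → H → H)
    (hFD : ∀ ε > (0:ℝ), ∀ y ∈ D, F ε y ∈ D)
    (hF : ∀ ε > (0:ℝ), ∀ y ∈ D, ε • F ε y + (F ε y - T (F ε y)) = ε • y)
    (ε₁ ε₂ : ℝ) (h1 : 0 < ε₁) (h2 : 0 < ε₂) (x : H) (hx : x ∈ D) :
    ‖F ε₂ x - F ε₁ x‖ ≤ (|ε₂ - ε₁| / min ε₁ ε₂) * ‖x - F (min ε₁ ε₂) x‖ := by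
  have heq : ∀ ε > (0:ℝ), F ε x - T (F ε x) = ε • (x - F ε x) := by
    intro ε hε
    have h := hF ε hε x hx
    have h' : F ε x - T (F ε x) = ε • x - ε • F ε x := eq_sub_of_add_eq' h
    rw [h', smul_sub]
  have hmemD : ∀ ε > (0:ℝ), F ε x ∈ D := fun ε hε => hFD ε hε x hx
  rcases le_total ε₁ ε₂ with hle | hle
  · rw [min_eq_left hle]
    have key := aux_key_stmt7 ε₁ ε₂ h2 x (F ε₁ x) (F ε₂ x)
      (T (F ε₁ x)) (T (F ε₂ x))
      (hT _ (hmemD ε₂ h2) _ (hmemD ε₁ h1))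
      (heq ε₁ h1) (heq ε₂ h2)
    refine key.trans ?_
    gcongr
  · rw [min_eq_right hle]
    have key := aux_key_stmt7 ε₂ ε₁ h1 x (F ε₂ x) (F ε₁ x)
      (T (F ε₂ x)) (T (F ε₁ x))
      (hT _ (hmemD ε₁ h1) _ (hmemD ε₂ h2))
      (heq ε₂ h2) (heq ε₁ h1)
    rw [norm_sub_rev, abs_sub_comm] at key
    refine key.trans ?_
    gcongr
end

section
/- Let D be a nonempty closed convex subset of a real Hilbert space H, T : D → D nonexpansive, x₀ ∈ D, and let x : [0, ∞) → H be a locally absolutely continuous solution of the ODE -ẋ(t) = proj_D(x(t)) - T(proj_D(x(t))) for a.e. t ≥ 0 with x(0) = x₀. Then x(t) ∈ D for all t ≥ 0, and consequently x solves -ẋ(t) = x(t) - T(x(t)). -/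
open Set Metric intervalIntegral MeasureTheory
open scoped RealInnerProductSpace

theorem stmt_10
    {H : Type*} [NormedAddCommGroup H] [InnerProductSpace ℝ H] [CompleteSpace H]
    (D : Set H) (hD : D.Nonempty) (hDc : IsClosed D) (hDconv : Convex ℝ D)
    (T : H → H) (hTD : ∀ x ∈ D, T x ∈ D)
    (hT : ∀ x ∈ D, ∀ y ∈ D, ‖T x - T y‖ ≤ ‖x - y‖)
    (proj : H → H) (hprojD : ∀ x, proj x ∈ D)
    (hproj : ∀ x, ‖x - proj x‖ = infDist x D)
    (x₀ : H) (hx₀ : x₀ ∈ D) (x : ℝ → H)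
    (hx0 : x 0 = x₀)
    (hx : ∀ t ≥ (0:ℝ), x t = x₀ - ∫ s in (0:ℝ)..t, (proj (x s) - T (proj (x s)))) :
    (∀ t ≥ (0:ℝ), x t ∈ D) ∧
    (∀ t ≥ (0:ℝ), x t = x₀ - ∫ s in (0:ℝ)..t, (x s - T (x s))) := by
  -- variational inequality for the projection
  have VI : ∀ u : H, ∀ y ∈ D, ⟪u - proj u, y - proj u⟫ ≤ 0 := by
    intro u y hy
    have h1 : ‖u - proj u‖ = ⨅ w : D, ‖u - w‖ := by
      rw [hproj u, infDist_eq_iInf]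
      simp only [dist_eq_norm]
    exact (norm_eq_iInf_iff_real_inner_le_zero hDconv (hprojD u)).1 h1 y hy
  -- projection of a member is itself
  have projmem : ∀ u ∈ D, proj u = u := by
    intro u hu
    have h := hproj u
    rw [infDist_zero_of_mem hu, norm_eq_zero, sub_eq_zero] at h
    exact h.symm
  -- the projection is nonexpansive
  have projlip : ∀ a b : H, ‖proj a - proj b‖ ≤ ‖a - b‖ := by
    intro a b
    set P := proj a
    set Q := proj b
    have h1 : ⟪a - P, Q - P⟫ ≤ 0 := VI a Q (hprojD b)
    have h2 : ⟪b - Q, P - Q⟫ ≤ 0 := VI b P (hprojD a)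
    have h1' : 0 ≤ ⟪a - P, P - Q⟫ := by
      rw [show Q - P = -(P - Q) by abel, inner_neg_right] at h1
      linarith
    have key : 0 ≤ ⟪(a - b) - (P - Q), P - Q⟫ := by
      rw [show (a - b) - (P - Q) = (a - P) - (b - Q) by abel, inner_sub_left]
      linarith
    rw [inner_sub_left, real_inner_self_eq_norm_sq] at key
    have hle := real_inner_le_norm (a - b) (P - Q)
    nlinarith [norm_nonneg (P - Q), norm_nonneg (a - b)]
  -- Part 1
  have part1 : ∀ t ≥ (0:ℝ), x t ∈ D := by
    intro t ht
    rcases eq_or_lt_of_le ht with h0 | h0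
    · rw [← h0, hx0]; exact hx₀
    set F : ℝ → H := fun s => proj (x s) - T (proj (x s)) with hF
    by_cases hint : IntervalIntegrable F volume 0 t
    · -- the integrable case: real work
      have hsub : ∀ s ∈ Icc (0:ℝ) t, IntervalIntegrable F volume 0 s := by
        intro s hs
        exact hint.mono_set (by rw [uIcc_of_le hs.1, uIcc_of_le ht]; exact Icc_subset_Icc le_rfl hs.2)
      have hprim : ContinuousOn (fun s => ∫ u in (0:ℝ)..s, F u) (Icc 0 t) := by
        have := continuousOn_primitive_interval' (μ := volume) hint left_mem_uIcc
        rwa [uIcc_of_le ht] at this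
      have hcx : ContinuousOn x (Icc 0 t) := by
        apply (continuousOn_const.sub hprim).congr
        intro s hs
        exact hx s hs.1
      have hvlip : ∀ a b : H, ‖(proj a - T (proj a)) - (proj b - T (proj b))‖ ≤ 2 * ‖a - b‖ := by
        intro a b
        have h1 := projlip a b
        have h2 : ‖T (proj a) - T (proj b)‖ ≤ ‖proj a - proj b‖ :=
          hT _ (hprojD a) _ (hprojD b)
        calc ‖(proj a - T (proj a)) - (proj b - T (proj b))‖
            = ‖(proj a - proj b) - (T (proj a) - T (proj b))‖ := by congr 1; abel
          _ ≤ ‖proj a - proj b‖ + ‖T (proj a) - T (proj b)‖ := norm_sub_le _ _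
          _ ≤ 2 * ‖a - b‖ := by linarith
      have hvcont : Continuous fun u : H => proj u - T (proj u) := by
        apply (LipschitzWith.of_dist_le_mul (K := 2) ?_).continuous
        intro a b
        simp only [dist_eq_norm, NNReal.coe_ofNat]
        exact hvlip a b
      have hcF : ContinuousOn F (Icc 0 t) := hvcont.comp_continuousOn hcx
      -- the squared distance function
      set f : ℝ → ℝ := fun s => ‖x s - proj (x s)‖ ^ 2 with hfdef
      have hfcont : ContinuousOn f (Icc 0 t) := by
        have : f = fun s => infDist (x s) D ^ 2 := by
          funext s; rw [hfdef]; simp only [hproj]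
        rw [this]
        exact ((continuous_infDist_pt D).comp_continuousOn hcx).pow 2
      have hf0 : f 0 ≤ 0 := by
        simp only [hfdef, hx0, hproj, infDist_zero_of_mem hx₀]
        norm_num
      have key : ∀ s ∈ Icc (0:ℝ) t, f s ≤ (fun _ : ℝ => (0:ℝ)) s := by
        apply image_le_of_liminf_slope_right_le_deriv_boundary hfcont hf0 continuousOn_const
          (fun τ _ => hasDerivWithinAt_const τ (Ici τ) (0:ℝ))
        intro τ hτ r hr
        set p := proj (x τ) with hp
        have hpD : p ∈ D := hprojD _
        -- derivative of x at τ from the right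
        have hmem : Icc (0:ℝ) t ∈ nhdsWithin τ (Ici τ) := by
          rw [mem_nhdsWithin]
          exact ⟨Iio t, isOpen_Iio, hτ.2, fun z hz => ⟨le_trans hτ.1 hz.2, le_of_lt hz.1⟩⟩
        have hmem' : Icc (0:ℝ) t ∈ nhdsWithin τ (Ioi τ) :=
          nhdsWithin_mono τ Ioi_subset_Ici_self hmem
        have hmeas : StronglyMeasurableAtFilter F (nhdsWithin τ (Ioi τ)) volume :=
          ⟨Icc 0 t, hmem', hcF.aestronglyMeasurable measurableSet_Icc⟩
        have hcFτ : ContinuousWithinAt F (Ioi τ) τ :=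
          (hcF τ ⟨hτ.1, le_of_lt hτ.2⟩).mono_of_mem_nhdsWithin hmem'
        have hderiv0 : HasDerivWithinAt (fun s => ∫ u in (0:ℝ)..s, F u) (F τ) (Ici τ) τ :=
          intervalIntegral.integral_hasDerivWithinAt_right (hsub τ ⟨hτ.1, le_of_lt hτ.2⟩)
            hmeas hcFτ
        have hdx : HasDerivWithinAt x (-F τ) (Ici τ) τ := by
          have h1 : HasDerivWithinAt (fun s => x₀ - ∫ u in (0:ℝ)..s, F u) (-F τ) (Ici τ) τ :=
            hderiv0.const_sub x₀
          exact h1.congr (fun z hz => hx z (le_trans hτ.1 hz)) (hx τ hτ.1)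
        -- comparison function g
        set g : ℝ → ℝ := fun s => ⟪x s - p, x s - p⟫ with hgdef
        have hdg : HasDerivWithinAt g (⟪x τ - p, -F τ⟫ + ⟪-F τ, x τ - p⟫) (Ici τ) τ :=
          HasDerivWithinAt.inner ℝ (hdx.sub_const p) (hdx.sub_const p)
        have hg'le : ⟪x τ - p, -F τ⟫ + ⟪-F τ, x τ - p⟫ ≤ 0 := by
          have hTp : T p ∈ D := hTD p hpD
          have h1 : ⟪x τ - p, T p - p⟫ ≤ 0 := VI (x τ) (T p) hTp
          have h2 : -F τ = T p - p := by rw [hF]; simp only [← hp]; abel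
          rw [h2, real_inner_comm (x τ - p) (T p - p)]
          linarith
        -- slope of g tends to g' < r
        have hslope : Filter.Tendsto (slope g τ) (nhdsWithin τ (Ioi τ))
            (nhds (⟪x τ - p, -F τ⟫ + ⟪-F τ, x τ - p⟫)) := by
          have := hasDerivWithinAt_iff_tendsto_slope.1 hdg
          rwa [Ici_sdiff_left] at this
        have hev1 : ∀ᶠ z in nhdsWithin τ (Ioi τ), slope g τ z < r :=
          hslope.eventually_lt_const (lt_of_le_of_lt hg'le hr)
        have hev2 : ∀ᶠ z in nhdsWithin τ (Ioi τ), z ∈ Ioc τ t :=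
          Filter.eventually_of_mem (Ioc_mem_nhdsGT_of_mem ⟨le_rfl, hτ.2⟩) (fun z hz => hz)
        apply Filter.Eventually.frequently
        filter_upwards [hev1, hev2] with z hz1 hz2
        have hzt : z ∈ Icc (0:ℝ) t := ⟨le_trans hτ.1 (le_of_lt hz2.1), hz2.2⟩
        have hfg : f z ≤ g z := by
          rw [hfdef, hgdef]
          simp only [real_inner_self_eq_norm_sq, hproj]
          apply pow_le_pow_left₀ infDist_nonneg _ 2
          rw [← dist_eq_norm]
          exact infDist_le_dist_of_mem hpD
        have hfgτ : f τ = g τ := by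
          rw [hfdef, hgdef]
          simp [real_inner_self_eq_norm_sq, hp]
        calc slope f τ z = (f z - f τ) / (z - τ) := slope_def_field f τ z
          _ ≤ (g z - g τ) / (z - τ) := by
              apply div_le_div_of_nonneg_right ?_ (by linarith [hz2.1]) |>.trans le_rfl
              · linarith
          _ = slope g τ z := (slope_def_field g τ z).symm
          _ < r := hz1
      have hft : f t ≤ 0 := key t ⟨ht, le_rfl⟩
      have hft0 : f t = 0 := le_antisymm hft (by positivity)
      have : x t = proj (x t) := by
        rw [hfdef] at hft0
        have := pow_eq_zero_iff (n := 2) (by norm_num) |>.1 hft0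
        rw [norm_eq_zero, sub_eq_zero] at this
        exact this
      rw [this]; exact hprojD _
    · -- non-integrable: junk value
      rw [hx t ht, intervalIntegral.integral_undef hint, sub_zero]
      exact hx₀
  refine ⟨part1, ?_⟩
  intro t ht
  rw [hx t ht]
  congr 1
  apply intervalIntegral.integral_congr
  intro s hs
  rw [uIcc_of_le ht] at hs
  have h : proj (x s) = x s := projmem _ (part1 s hs.1)
  show proj (x s) - T (proj (x s)) = x s - T (x s)
  rw [h]
end

section
/- Let D be a nonempty closed convex subset of a real Hilbert space H, T : D → D nonexpansive with Fix T ≠ ∅, and let x : [0, ∞) → D be the unique solution of -ẋ(t) = x(t) - T(x(t)), x(0) = x₀ ∈ D. Then for all t > 0: ‖x(t) - T(x(t))‖ ≤ (1/√t) · dist(x₀, Fix T). -/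
open Set Metric MeasureTheory Filter Topology
open scoped RealInnerProductSpace

set_option linter.unusedSectionVars false
set_option linter.unusedVariables false
set_option maxHeartbeats 1000000

section Aux

variable {H : Type*} [NormedAddCommGroup H] [InnerProductSpace ℝ H] [CompleteSpace H]

lemma aux_firm {D : Set H} {T : H → H}
    (hT : ∀ x ∈ D, ∀ y ∈ D, ‖T x - T y‖ ≤ ‖x - y‖)
    {u z : H} (hu : u ∈ D) (hz : z ∈ D) (hzfix : T z = z) :
    ‖u - T u‖ ^ 2 ≤ 2 * ⟪u - T u, u - z⟫ := by
  have h1 : ‖T u - z‖ ≤ ‖u - z‖ := by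
    have := hT u hu z hz; rwa [hzfix] at this
  have h2 : ‖T u - z‖ ^ 2 ≤ ‖u - z‖ ^ 2 :=
    pow_le_pow_left₀ (norm_nonneg _) h1 2
  have e : T u - z = (u - z) - (u - T u) := by abel
  rw [e, norm_sub_sq_real] at h2
  have hc := real_inner_comm (u - z) (u - T u)
  nlinarith

lemma aux_mono {D : Set H} {T : H → H}
    (hT : ∀ x ∈ D, ∀ y ∈ D, ‖T x - T y‖ ≤ ‖x - y‖)
    {a b : H} (ha : a ∈ D) (hb : b ∈ D) :
    0 ≤ ⟪(a - T a) - (b - T b), a - b⟫ := by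
  have h1 : ⟪T a - T b, a - b⟫ ≤ ‖a - b‖ ^ 2 := by
    calc ⟪T a - T b, a - b⟫ ≤ ‖T a - T b‖ * ‖a - b‖ := real_inner_le_norm _ _
    _ ≤ ‖a - b‖ * ‖a - b‖ := mul_le_mul_of_nonneg_right (hT a ha b hb) (norm_nonneg _)
    _ = ‖a - b‖ ^ 2 := (sq _).symm
  have e : (a - T a) - (b - T b) = (a - b) - (T a - T b) := by abel
  rw [e, inner_sub_left, real_inner_self_eq_norm_sq]
  linarith

lemma aux_slope {x : ℝ → H} {d : H} {t : ℝ} (h : HasDerivAt x d t) :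
    Tendsto (fun h : ℝ => ‖x (t + h) - x t‖ / h) (𝓝[>] 0) (𝓝 ‖d‖) := by
  have h1 : Tendsto (slope x t) (𝓝[≠] t) (𝓝 d) := hasDerivAt_iff_tendsto_slope.1 h
  have h2 : Tendsto (fun h : ℝ => t + h) (𝓝[>] (0:ℝ)) (𝓝[≠] t) := by
    apply tendsto_nhdsWithin_of_tendsto_nhds_of_eventually_within
    · have : Tendsto (fun h : ℝ => t + h) (𝓝 (0:ℝ)) (𝓝 (t + 0)) :=
        (continuous_const.add continuous_id).tendsto 0
      rw [add_zero] at this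
      exact this.mono_left nhdsWithin_le_nhds
    · filter_upwards [self_mem_nhdsWithin] with h (hh : (0:ℝ) < h)
      simp [hh.ne']
  have h3 := (h1.comp h2).norm
  apply h3.congr'
  filter_upwards [self_mem_nhdsWithin] with h (hh : (0:ℝ) < h)
  show ‖slope x t (t + h)‖ = ‖x (t + h) - x t‖ / h
  rw [slope_def_module]
  rw [norm_smul, add_sub_cancel_left, norm_inv, Real.norm_eq_abs, abs_of_pos hh,
    inv_mul_eq_div]

lemma aux_fcont {D : Set H} {T : H → H}
    (hT : ∀ x ∈ D, ∀ y ∈ D, ‖T x - T y‖ ≤ ‖x - y‖)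
    {x : ℝ → H} {s : Set ℝ} (hx : ContinuousOn x s) (hmem : ∀ u ∈ s, x u ∈ D) :
    ContinuousOn (fun u => x u - T (x u)) s := by
  have hTc : ContinuousOn T D := by
    have : LipschitzOnWith 1 T D := by
      apply LipschitzOnWith.of_dist_le_mul
      intro a ha b hb
      rw [dist_eq_norm, dist_eq_norm, NNReal.coe_one, one_mul]
      exact hT a ha b hb
    exact this.continuousOn
  exact hx.sub (hTc.comp hx hmem)


lemma aux_core {D : Set H} {T : H → H} {x₀ : H} {x : ℝ → H} {z : H}
    (hTD : ∀ x ∈ D, T x ∈ D)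
    (hT : ∀ x ∈ D, ∀ y ∈ D, ‖T x - T y‖ ≤ ‖x - y‖)
    (hz : z ∈ D) (hzf : T z = z)
    (hx₀ : x₀ ∈ D)
    (hxD : ∀ t ≥ (0:ℝ), x t ∈ D)
    (hx : ∀ t ≥ (0:ℝ), x t = x₀ - ∫ s in (0:ℝ)..t, (x s - T (x s)))
    {b : ℝ} (hb : 0 < b)
    (hP : IntervalIntegrable (fun s => x s - T (x s)) volume 0 b) :
    ContinuousOn x (Icc 0 b) ∧
    (∀ s ∈ Icc (0:ℝ) b, ‖x s - z‖ ≤ ‖x₀ - z‖) ∧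
    (∀ t ∈ Ioo (0:ℝ) b, t * ‖x t - T (x t)‖ ^ 2 ≤ ‖x₀ - z‖ ^ 2) := by
  set f : ℝ → H := fun s => x s - T (x s) with hf
  have hx00 : x 0 = x₀ := by
    have := hx 0 le_rfl
    rwa [intervalIntegral.integral_same, sub_zero] at this
  -- integrability on subintervals
  have hPsub : ∀ a ∈ Icc (0:ℝ) b, IntervalIntegrable f volume 0 a := by
    intro a ha
    apply hP.mono_set
    rw [uIcc_of_le ha.1, uIcc_of_le hb.le]
    exact Icc_subset_Icc le_rfl ha.2
  -- continuity of x on [0, b]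
  have hxcont : ContinuousOn x (Icc 0 b) := by
    have hprim : ContinuousOn (fun a => ∫ s in (0:ℝ)..a, f s) (Icc 0 b) := by
      have h1 : IntegrableOn f (uIcc 0 b) volume := by
        rw [uIcc_of_le hb.le, integrableOn_Icc_iff_integrableOn_Ioc]
        exact (intervalIntegrable_iff_integrableOn_Ioc_of_le hb.le).1 hP
      simpa using intervalIntegral.continuousOn_primitive_interval h1 |>.mono
        (by rw [uIcc_of_le hb.le])
    exact (continuousOn_const.sub hprim).congr (fun a ha => hx a ha.1)
  have hfcont : ContinuousOn f (Icc 0 b) := aux_fcont hT hxcont (fun u hu => hxD u hu.1)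
  -- derivative of x on (0, b)
  have hder : ∀ s ∈ Ioo (0:ℝ) b, HasDerivAt x (-(f s)) s := by
    intro s hs
    have hmem : Icc (0:ℝ) b ∈ 𝓝 s := Icc_mem_nhds hs.1 hs.2
    have hcontAt : ContinuousAt f s := hfcont.continuousAt hmem
    have hmeas : StronglyMeasurableAtFilter f (𝓝 s) volume :=
      (hfcont.mono Ioo_subset_Icc_self).stronglyMeasurableAtFilter isOpen_Ioo s hs
    have hF : HasDerivAt (fun u => ∫ r in (0:ℝ)..u, f r) (f s) s :=
      intervalIntegral.integral_hasDerivAt_right (hPsub s ⟨hs.1.le, hs.2.le⟩) hmeas hcontAt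
    have hE : HasDerivAt (fun u => x₀ - ∫ r in (0:ℝ)..u, f r) (0 - f s) s :=
      (hasDerivAt_const s x₀).sub hF
    rw [zero_sub] at hE
    apply hE.congr_of_eventuallyEq
    filter_upwards [Ioi_mem_nhds hs.1] with u (hu : (0:ℝ) < u)
    exact hx u hu.le
  -- the norm-squared function along the flow + energy
  have hnsqcont : ContinuousOn (fun u => ‖f u‖ ^ 2) (Icc 0 b) := (hfcont.norm).pow 2
  have hnsqint : ∀ a ∈ Icc (0:ℝ) b, IntervalIntegrable (fun u => ‖f u‖ ^ 2) volume 0 a := by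
    intro a ha
    apply ContinuousOn.intervalIntegrable
    exact hnsqcont.mono (by rw [uIcc_of_le ha.1]; exact Icc_subset_Icc le_rfl ha.2)
  set G : ℝ → ℝ := fun s => ⟪x s - z, x s - z⟫ + ∫ u in (0:ℝ)..s, ‖f u‖ ^ 2 with hG
  have hGcont : ContinuousOn G (Icc 0 b) := by
    apply ContinuousOn.add
    · exact (hxcont.sub continuousOn_const).inner (hxcont.sub continuousOn_const)
    · have h1 : IntegrableOn (fun u => ‖f u‖ ^ 2) (uIcc 0 b) volume := by
        rw [uIcc_of_le hb.le]
        exact (hnsqcont.mono (by rw [← uIcc_of_le hb.le])).integrableOn_Icc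
      simpa using intervalIntegral.continuousOn_primitive_interval h1 |>.mono
        (by rw [uIcc_of_le hb.le])
  have hGder : ∀ s ∈ Ioo (0:ℝ) b, HasDerivAt G
      ((⟪x s - z, -(f s)⟫ + ⟪-(f s), x s - z⟫) + ‖f s‖ ^ 2) s := by
    intro s hs
    have d1 : HasDerivAt (fun u => x u - z) (-(f s)) s := (hder s hs).sub_const z
    have d2 : HasDerivAt (fun u => ⟪x u - z, x u - z⟫)
        (⟪x s - z, -(f s)⟫ + ⟪-(f s), x s - z⟫) s := d1.inner ℝ d1
    have hmem : Icc (0:ℝ) b ∈ 𝓝 s := Icc_mem_nhds hs.1 hs.2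
    have d3 : HasDerivAt (fun a => ∫ u in (0:ℝ)..a, ‖f u‖ ^ 2) (‖f s‖ ^ 2) s := by
      apply intervalIntegral.integral_hasDerivAt_right (hnsqint s ⟨hs.1.le, hs.2.le⟩)
      · exact (hnsqcont.mono Ioo_subset_Icc_self).stronglyMeasurableAtFilter isOpen_Ioo s hs
      · exact hnsqcont.continuousAt hmem
    exact d2.add d3
  have hGderle : ∀ s ∈ Ioo (0:ℝ) b,
      (⟪x s - z, -(f s)⟫ + ⟪-(f s), x s - z⟫) + ‖f s‖ ^ 2 ≤ 0 := by
    intro s hs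
    have hfirm := aux_firm hT (hxD s hs.1.le) hz hzf
    have e1 : ⟪x s - z, -(f s)⟫ = -⟪f s, x s - z⟫ := by
      rw [inner_neg_right, real_inner_comm]
    have e2 : ⟪-(f s), x s - z⟫ = -⟪f s, x s - z⟫ := by rw [inner_neg_left]
    rw [e1, e2]
    have : ‖f s‖ ^ 2 ≤ 2 * ⟪f s, x s - z⟫ := hfirm
    linarith
  have hGanti : AntitoneOn G (Icc 0 b) := by
    apply antitoneOn_of_deriv_nonpos (convex_Icc 0 b) hGcont
    · intro s hs
      rw [interior_Icc] at hs
      exact (hGder s hs).differentiableAt.differentiableWithinAt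
    · intro s hs
      rw [interior_Icc] at hs
      rw [(hGder s hs).deriv]
      exact hGderle s hs
  have hG0 : G 0 = ‖x₀ - z‖ ^ 2 := by
    rw [hG]
    simp [hx00, real_inner_self_eq_norm_sq]
  -- conclusion (2)
  have hxbound : ∀ s ∈ Icc (0:ℝ) b, ‖x s - z‖ ≤ ‖x₀ - z‖ := by
    intro s hs
    have h1 : G s ≤ G 0 := hGanti (left_mem_Icc.2 hb.le) hs hs.1
    have h2 : (0:ℝ) ≤ ∫ u in (0:ℝ)..s, ‖f u‖ ^ 2 :=
      intervalIntegral.integral_nonneg hs.1 (fun u _ => by positivity)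
    have h3 : ⟪x s - z, x s - z⟫ = ‖x s - z‖ ^ 2 := real_inner_self_eq_norm_sq _
    rw [hG0] at h1
    simp only [hG] at h1
    rw [h3] at h1
    nlinarith [norm_nonneg (x s - z), norm_nonneg (x₀ - z)]
  refine ⟨hxcont, hxbound, ?_⟩
  intro t htIoo
  -- energy estimate
  have henergy : (∫ u in (0:ℝ)..t, ‖f u‖ ^ 2) ≤ ‖x₀ - z‖ ^ 2 := by
    have h1 : G t ≤ G 0 := hGanti (left_mem_Icc.2 hb.le) ⟨htIoo.1.le, htIoo.2.le⟩ htIoo.1.le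
    rw [hG0] at h1
    simp only [hG] at h1
    have h2 : (0:ℝ) ≤ ⟪x t - z, x t - z⟫ := real_inner_self_nonneg
    linarith
  -- monotonicity of ‖f‖
  have hfmono : ∀ s, 0 < s → s ≤ t → ‖f t‖ ≤ ‖f s‖ := by
    intro s hs0 hst
    have ht0 : (0:ℝ) < t := lt_of_lt_of_le hs0 hst
    have hdt := hder t htIoo
    have hds := hder s ⟨hs0, lt_of_le_of_lt hst htIoo.2⟩
    have hA := aux_slope hdt
    have hB := aux_slope hds
    rw [norm_neg] at hA hB
    refine le_of_tendsto_of_tendsto hA hB ?_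
    -- show eventual inequality for h ∈ (0, b - t)
    have hbt : (0:ℝ) < b - t := by linarith [htIoo.2]
    have hmem : Ioo (0:ℝ) (b - t) ∈ 𝓝[>] (0:ℝ) :=
      Ioo_mem_nhdsGT_of_mem (by constructor <;> [exact le_rfl; exact hbt])
    -- pointwise: for each such h, φ antitone
    filter_upwards [hmem] with h hh
    obtain ⟨hh0, hhb⟩ := hh
    set φ : ℝ → ℝ := fun u => ⟪x (u + h) - x u, x (u + h) - x u⟫ with hφ
    have hxsh : ContinuousOn (fun u => x (u + h)) (Icc 0 (b - h)) := by
      apply hxcont.comp ((continuous_id.add continuous_const).continuousOn)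
      intro u hu
      have h1 : (0:ℝ) ≤ u := hu.1
      have h2 : u ≤ b - h := hu.2
      show u + h ∈ Icc 0 b
      constructor <;> linarith
    have hφcont : ContinuousOn φ (Icc 0 (b - h)) :=
      ((hxsh.sub (hxcont.mono (Icc_subset_Icc le_rfl (by linarith)))).inner
        (hxsh.sub (hxcont.mono (Icc_subset_Icc le_rfl (by linarith)))))
    have hφder : ∀ u ∈ Ioo (0:ℝ) (b - h), HasDerivAt φ
        (⟪x (u + h) - x u, -(f (u + h)) - -(f u)⟫
          + ⟪-(f (u + h)) - -(f u), x (u + h) - x u⟫) u := by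
      intro u hu
      have hd1 : HasDerivAt x (-(f (u + h))) (u + h) :=
        hder (u + h) ⟨by linarith [hu.1], by linarith [hu.2]⟩
      have hd2 : HasDerivAt (fun u => x (u + h)) (-(f (u + h))) u := by
        have hid : HasDerivAt (fun u : ℝ => u + h) 1 u := (hasDerivAt_id u).add_const h
        have := hd1.scomp u hid
        simpa [Function.comp_def] using this
      have hd3 : HasDerivAt x (-(f u)) u := hder u ⟨hu.1, by linarith [hu.2]⟩
      exact (hd2.sub hd3).inner ℝ (hd2.sub hd3)
    have hφanti : AntitoneOn φ (Icc 0 (b - h)) := by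
      apply antitoneOn_of_deriv_nonpos (convex_Icc 0 (b - h)) hφcont
      · intro u hu
        rw [interior_Icc] at hu
        exact (hφder u hu).differentiableAt.differentiableWithinAt
      · intro u hu
        rw [interior_Icc] at hu
        rw [(hφder u hu).deriv]
        have hmono := aux_mono hT (hxD (u + h) (by linarith [hu.1])) (hxD u hu.1.le)
        have e1 : -(f (u + h)) - -(f u) = -((x (u+h) - T (x (u+h))) - (x u - T (x u))) := by
          simp only [hf]; abel
        rw [e1, inner_neg_right, inner_neg_left, real_inner_comm]
        linarith
    have hkey : φ t ≤ φ s :=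
      hφanti ⟨hs0.le, by linarith⟩ ⟨ht0.le, by linarith⟩ hst
    have hnorm : ‖x (t + h) - x t‖ ≤ ‖x (s + h) - x s‖ := by
      have e1 : φ t = ‖x (t + h) - x t‖ ^ 2 := real_inner_self_eq_norm_sq _
      have e2 : φ s = ‖x (s + h) - x s‖ ^ 2 := real_inner_self_eq_norm_sq _
      rw [e1, e2] at hkey
      nlinarith [norm_nonneg (x (t + h) - x t), norm_nonneg (x (s + h) - x s)]
    exact (div_le_div_iff_of_pos_right hh0).2 hnorm
  -- integral comparison
  have hconst : t * ‖f t‖ ^ 2 = ∫ u in (0:ℝ)..t, ‖f t‖ ^ 2 := by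
    rw [intervalIntegral.integral_const, sub_zero, smul_eq_mul]
  have hcomp : (∫ u in (0:ℝ)..t, ‖f t‖ ^ 2) ≤ ∫ u in (0:ℝ)..t, ‖f u‖ ^ 2 := by
    apply intervalIntegral.integral_mono_ae_restrict htIoo.1.le
      intervalIntegrable_const (hnsqint t ⟨htIoo.1.le, htIoo.2.le⟩)
    have h0 : ∀ᵐ u ∂(volume.restrict (Icc (0:ℝ) t)), u ≠ 0 := by
      exact ae_restrict_of_ae (compl_mem_ae_iff.2 (measure_singleton 0))
    filter_upwards [ae_restrict_mem measurableSet_Icc, h0] with u hu hne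
    have hu0 : 0 < u := lt_of_le_of_ne hu.1 (Ne.symm hne)
    exact pow_le_pow_left₀ (norm_nonneg _) (hfmono u hu0 hu.2) 2
  calc t * ‖f t‖ ^ 2 = ∫ u in (0:ℝ)..t, ‖f t‖ ^ 2 := hconst
    _ ≤ ∫ u in (0:ℝ)..t, ‖f u‖ ^ 2 := hcomp
    _ ≤ ‖x₀ - z‖ ^ 2 := henergy

lemma aux_allP {D : Set H} {T : H → H} {x₀ : H} {x : ℝ → H} {z : H}
    (hTD : ∀ x ∈ D, T x ∈ D)
    (hT : ∀ x ∈ D, ∀ y ∈ D, ‖T x - T y‖ ≤ ‖x - y‖)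
    (hz : z ∈ D) (hzf : T z = z)
    (hx₀ : x₀ ∈ D)
    (hxD : ∀ t ≥ (0:ℝ), x t ∈ D)
    (hx : ∀ t ≥ (0:ℝ), x t = x₀ - ∫ s in (0:ℝ)..t, (x s - T (x s))) :
    ∀ a : ℝ, 0 ≤ a → IntervalIntegrable (fun s => x s - T (x s)) volume 0 a := by
  set f : ℝ → H := fun s => x s - T (x s) with hf
  by_contra hcon
  push_neg at hcon
  obtain ⟨a₀, ha₀0, ha₀⟩ := hcon
  set A : Set ℝ := {a : ℝ | 0 ≤ a ∧ ¬ IntervalIntegrable f volume 0 a} with hA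
  have hAne : A.Nonempty := ⟨a₀, ha₀0, ha₀⟩
  have hbd : BddBelow A := ⟨0, fun a ha => ha.1⟩
  set c := sInf A with hc
  have hc0 : 0 ≤ c := le_csInf hAne (fun a ha => ha.1)
  have hmonoP : ∀ a b' : ℝ, 0 ≤ a → a ≤ b' →
      IntervalIntegrable f volume 0 b' → IntervalIntegrable f volume 0 a := by
    intro a b' ha hab' hI
    apply hI.mono_set
    rw [uIcc_of_le ha, uIcc_of_le (ha.trans hab')]
    exact Icc_subset_Icc le_rfl hab'
  have hlow : ∀ a : ℝ, 0 ≤ a → a < c → IntervalIntegrable f volume 0 a := by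
    intro a ha hac
    by_contra hna
    exact absurd (csInf_le hbd ⟨ha, hna⟩) (not_le.2 hac)
  have hhigh : ∀ s : ℝ, c < s → ¬ IntervalIntegrable f volume 0 s := by
    intro s hcs hPs
    obtain ⟨a, haA, has⟩ := exists_lt_of_csInf_lt hAne hcs
    exact haA.2 (hmonoP a s haA.1 has.le hPs)
  have hxconst : ∀ s : ℝ, c < s → x s = x₀ := by
    intro s hcs
    have h1 := hx s (hc0.trans hcs.le)
    rwa [intervalIntegral.integral_undef (hhigh s hcs), sub_zero] at h1
  have hfconst : ∀ s : ℝ, c < s → f s = x₀ - T x₀ := by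
    intro s hcs
    simp only [hf, hxconst s hcs]
  -- interior regularity
  have hcore : ∀ a : ℝ, 0 < a → a < c →
      ContinuousOn x (Icc 0 a) ∧ ∀ s ∈ Icc (0:ℝ) a, ‖x s - z‖ ≤ ‖x₀ - z‖ := by
    intro a ha0 hac
    obtain ⟨h1, h2, _⟩ := aux_core hTD hT hz hzf hx₀ hxD hx ha0 (hlow a ha0.le hac)
    exact ⟨h1, h2⟩
  -- f is continuous on Ioo 0 c
  have hfcont : ContinuousOn f (Ioo 0 c) := by
    intro s hs
    set a : ℝ := (s + c) / 2 with ha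
    have hsa : s < a := by simp only [ha]; linarith [hs.2]
    have hac : a < c := by simp only [ha]; linarith [hs.2]
    have ha0 : 0 < a := lt_of_le_of_lt (le_of_lt hs.1) hsa
    have hxc := (hcore a ha0 hac).1
    have hfc : ContinuousOn f (Icc 0 a) :=
      aux_fcont hT hxc (fun u hu => hxD u hu.1)
    have : ContinuousAt f s := hfc.continuousAt (Icc_mem_nhds hs.1 hsa)
    exact this.continuousWithinAt
  -- establish integrability on (0, c+1]
  have hM : IntervalIntegrable f volume 0 (c + 1) := by
    rw [intervalIntegrable_iff_integrableOn_Ioc_of_le (by linarith : (0:ℝ) ≤ c + 1)]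
    set M : ℝ := max (2 * ‖x₀ - z‖) ‖x₀ - T x₀‖ with hMdef
    have hmeas : AEStronglyMeasurable f (volume.restrict (Ioc 0 (c + 1))) := by
      have m1 : AEStronglyMeasurable f (volume.restrict (Ioo 0 c)) :=
        hfcont.aestronglyMeasurable measurableSet_Ioo
      have m2 : AEStronglyMeasurable f (volume.restrict (Ioi c)) := by
        apply AEStronglyMeasurable.congr (aestronglyMeasurable_const (b := x₀ - T x₀))
        filter_upwards [ae_restrict_mem measurableSet_Ioi] with s hs
        exact (hfconst s hs).symm
      have m3 : AEStronglyMeasurable f (volume.restrict (Ioo 0 c ∪ Ioi c)) :=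
        (aestronglyMeasurable_union_iff).2 ⟨m1, m2⟩
      have m4 : AEStronglyMeasurable f (volume.restrict ((Ioo 0 c ∪ Ioi c) ∪ {c})) := by
        apply (aestronglyMeasurable_union_iff).2
        refine ⟨m3, ?_⟩
        rw [Measure.restrict_eq_zero.2 (measure_singleton c)]
        exact aestronglyMeasurable_zero_measure f
      apply m4.mono_measure
      apply Measure.restrict_mono _ le_rfl
      intro u hu
      rcases lt_trichotomy u c with h | h | h
      · exact Or.inl (Or.inl ⟨hu.1, h⟩)
      · exact Or.inr (by simp [h])
      · exact Or.inl (Or.inr h)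
    apply Integrable.mono' (g := fun _ => M)
      (integrableOn_const measure_Ioc_lt_top.ne) hmeas
    have h0 : ∀ᵐ u ∂(volume.restrict (Ioc (0:ℝ) (c + 1))), u ≠ c :=
      ae_restrict_of_ae (compl_mem_ae_iff.2 (measure_singleton c))
    filter_upwards [ae_restrict_mem measurableSet_Ioc, h0] with u hu hne
    rcases lt_trichotomy u c with h | h | h
    · -- bound via the core estimate
      set a : ℝ := (u + c) / 2 with ha
      have hua : u < a := by simp only [ha]; linarith
      have hac : a < c := by simp only [ha]; linarith
      have ha0 : 0 < a := lt_trans hu.1 hua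
      have hb := (hcore a ha0 hac).2 u ⟨hu.1.le, hua.le⟩
      have hxu : x u ∈ D := hxD u hu.1.le
      have e : f u = (x u - z) - (T (x u) - T z) := by
        simp only [hf, hzf]; abel
      have h1 : ‖f u‖ ≤ ‖x u - z‖ + ‖T (x u) - T z‖ := by
        rw [e]; exact norm_sub_le _ _
      have h2 : ‖T (x u) - T z‖ ≤ ‖x u - z‖ := hT (x u) hxu z hz
      have : ‖f u‖ ≤ 2 * ‖x₀ - z‖ := by linarith
      exact this.trans (le_max_left _ _)
    · exact absurd h hne
    · rw [hfconst u h]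
      exact le_max_right _ _
  exact hhigh (c + 1) (by linarith) hM


end Aux

theorem stmt_11
    {H : Type*} [NormedAddCommGroup H] [InnerProductSpace ℝ H] [CompleteSpace H]
    (D : Set H) (hD : D.Nonempty) (hDc : IsClosed D) (hDconv : Convex ℝ D)
    (T : H → H) (hTD : ∀ x ∈ D, T x ∈ D)
    (hT : ∀ x ∈ D, ∀ y ∈ D, ‖T x - T y‖ ≤ ‖x - y‖)
    (hfix : {z ∈ D | T z = z}.Nonempty)
    (x₀ : H) (hx₀ : x₀ ∈ D) (x : ℝ → H)
    (hxD : ∀ t ≥ (0:ℝ), x t ∈ D)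
    (hx0 : x 0 = x₀)
    (hx : ∀ t ≥ (0:ℝ), x t = x₀ - ∫ s in (0:ℝ)..t, (x s - T (x s)))
    (t : ℝ) (ht : 0 < t) :
    ‖x t - T (x t)‖ ≤ (1 / Real.sqrt t) * infDist x₀ {z ∈ D | T z = z} := by
  obtain ⟨z₀, hz₀⟩ := hfix
  have hP := aux_allP hTD hT hz₀.1 hz₀.2 hx₀ hxD hx (t + 1) (by linarith)
  have hkey : ∀ z ∈ {z ∈ D | T z = z}, Real.sqrt t * ‖x t - T (x t)‖ ≤ dist x₀ z := by
    intro z hzmem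
    obtain ⟨_, _, h3⟩ := aux_core hTD hT hzmem.1 hzmem.2 hx₀ hxD hx
      (b := t + 1) (by linarith) hP
    have h4 : t * ‖x t - T (x t)‖ ^ 2 ≤ ‖x₀ - z‖ ^ 2 :=
      h3 t ⟨ht, by linarith⟩
    have h5 : (Real.sqrt t * ‖x t - T (x t)‖) ^ 2 ≤ ‖x₀ - z‖ ^ 2 := by
      rw [mul_pow, Real.sq_sqrt ht.le]
      exact h4
    rw [dist_eq_norm]
    nlinarith [norm_nonneg (x₀ - z), mul_nonneg (Real.sqrt_nonneg t) (norm_nonneg (x t - T (x t)))]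
  have hinf : Real.sqrt t * ‖x t - T (x t)‖ ≤ infDist x₀ {z ∈ D | T z = z} := by
    rw [infDist_eq_iInf]
    have : Nonempty {z ∈ D | T z = z} := ⟨z₀, hz₀⟩
    have hne : Nonempty ({z ∈ D | T z = z} : Set H) := this
    exact le_ciInf fun z => hkey z z.2
  have hst : 0 < Real.sqrt t := Real.sqrt_pos.2 ht
  calc ‖x t - T (x t)‖ = (Real.sqrt t * ‖x t - T (x t)‖) / Real.sqrt t := by
        field_simp
    _ ≤ infDist x₀ {z ∈ D | T z = z} / Real.sqrt t := by
        exact (div_le_div_iff_of_pos_right hst).2 hinf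
    _ = (1 / Real.sqrt t) * infDist x₀ {z ∈ D | T z = z} := by ring
end

section
/- Let D be a nonempty closed convex subset of a real Hilbert space H and let T : D → D be α-Lipschitz with α ∈ [0,1), with (unique) fixed point x*. If x : [0, ∞) → D solves -ẋ(t) = x(t) - T(x(t)) with x(0) = x₀ ∈ D, then ‖x(t) - x*‖ ≤ e^{-(1-α)t}·‖x₀ - x*‖ for all t ≥ 0. -/
open Set Metric MeasureTheory Topology Filter

theorem stmt_12
    {H : Type*} [NormedAddCommGroup H] [InnerProductSpace ℝ H] [CompleteSpace H]
    (D : Set H) (hD : D.Nonempty) (hDc : IsClosed D) (hDconv : Convex ℝ D)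
    (T : H → H) (hTD : ∀ x ∈ D, T x ∈ D)
    (α : ℝ) (hα0 : 0 ≤ α) (hα1 : α < 1)
    (hT : ∀ x ∈ D, ∀ y ∈ D, ‖T x - T y‖ ≤ α * ‖x - y‖)
    (xs : H) (hxs : xs ∈ D) (hxsfix : T xs = xs)
    (x₀ : H) (hx₀ : x₀ ∈ D) (x : ℝ → H)
    (hxD : ∀ t ≥ (0:ℝ), x t ∈ D)
    (hx0 : x 0 = x₀)
    (hx : ∀ t ≥ (0:ℝ), x t = x₀ - ∫ s in (0:ℝ)..t, (x s - T (x s)))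
    (t : ℝ) (ht : 0 ≤ t) :
    ‖x t - xs‖ ≤ Real.exp (-(1 - α) * t) * ‖x₀ - xs‖ := by
  set g : ℝ → H := fun s => x s - T (x s) with hg_def
  have hgsplit : ∀ s : ℝ, 0 ≤ s → g s = (x s - xs) - (T (x s) - T xs) := by
    intro s hs
    rw [hxsfix, hg_def]
    abel
  have hgb : ∀ s : ℝ, 0 ≤ s → ‖g s‖ ≤ (1 + α) * ‖x s - xs‖ := by
    intro s hs
    calc ‖g s‖ ≤ ‖x s - xs‖ + ‖T (x s) - T xs‖ := by
          rw [hgsplit s hs]; exact norm_sub_le _ _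
      _ ≤ ‖x s - xs‖ + α * ‖x s - xs‖ := by
          linarith [hT (x s) (hxD s hs) xs hxs]
      _ = (1 + α) * ‖x s - xs‖ := by ring
  -- T is continuous on D
  have hLip : LipschitzOnWith (Real.toNNReal α) T D := by
    rw [lipschitzOnWith_iff_dist_le_mul]
    intro a ha b hb
    rw [dist_eq_norm, dist_eq_norm]
    simpa [Real.coe_toNNReal α hα0] using hT a ha b hb
  -- continuity of x and g on [0,b] when g is interval integrable on [0,b]
  have hcont : ∀ b : ℝ, 0 ≤ b → IntervalIntegrable g volume 0 b →
      ContinuousOn x (Icc 0 b) ∧ ContinuousOn g (Icc 0 b) := by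
    intro b hb hib
    have hIcc : uIcc (0:ℝ) b = Icc 0 b := uIcc_of_le hb
    have hxeq : ∀ u ∈ Icc (0:ℝ) b, x u = x₀ - ∫ s in (0:ℝ)..u, g s :=
      fun u hu => hx u hu.1
    have hFcont : ContinuousOn (fun u => ∫ s in (0:ℝ)..u, g s) (Icc 0 b) := by
      have := intervalIntegral.continuousOn_primitive_interval' hib
        (by rw [hIcc]; exact ⟨le_rfl, hb⟩)
      rwa [hIcc] at this
    have hxcont : ContinuousOn x (Icc 0 b) :=
      (continuousOn_const.sub hFcont).congr hxeq
    have hTxcont : ContinuousOn (fun u => T (x u)) (Icc 0 b) :=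
      hLip.continuousOn.comp hxcont fun u hu => hxD u hu.1
    exact ⟨hxcont, hxcont.sub hTxcont⟩
  -- the key decay estimate, assuming integrability
  have key : ∀ b : ℝ, 0 ≤ b → IntervalIntegrable g volume 0 b →
      ‖x b - xs‖ ≤ Real.exp (-(1 - α) * b) * ‖x₀ - xs‖ := by
    intro b hb hib
    obtain ⟨hxcont, hgcont⟩ := hcont b hb hib
    have hIcc : uIcc (0:ℝ) b = Icc 0 b := uIcc_of_le hb
    have hxeq : ∀ u ∈ Icc (0:ℝ) b, x u = x₀ - ∫ s in (0:ℝ)..u, g s :=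
      fun u hu => hx u hu.1
    -- derivative of x at interior points
    have hderiv : ∀ u ∈ Ioo (0:ℝ) b, HasDerivAt x (-(g u)) u := by
      intro u hu
      have hmem : Icc (0:ℝ) b ∈ 𝓝 u := Icc_mem_nhds hu.1 hu.2
      have hF' : HasDerivAt (fun u => ∫ s in (0:ℝ)..u, g s) (g u) u := by
        refine intervalIntegral.integral_hasDerivAt_right
          (hib.mono_set ?_) ?_ ?_
        · rw [hIcc, uIcc_of_le hu.1.le]
          exact Icc_subset_Icc le_rfl hu.2.le
        · exact (hgcont.mono Ioo_subset_Icc_self).stronglyMeasurableAtFilter isOpen_Ioo u hu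
        · exact (hgcont u ⟨hu.1.le, hu.2.le⟩).continuousAt hmem
      exact (hF'.const_sub x₀).congr_of_eventuallyEq
        (Filter.eventuallyEq_of_mem hmem hxeq)
    set c : ℝ := 2 * (1 - α) with hc_def
    -- the Lyapunov function is antitone
    have hφ : AntitoneOn (fun u => Real.exp (c * u) * ‖x u - xs‖ ^ 2) (Icc 0 b) := by
      apply antitoneOn_of_hasDerivWithinAt_nonpos (convex_Icc 0 b)
        (f' := fun u => Real.exp (c * u) * c * ‖x u - xs‖ ^ 2 +
          Real.exp (c * u) * (inner ℝ (x u - xs) (-(g u)) + inner ℝ (-(g u)) (x u - xs) : ℝ))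
      · exact ((Real.continuous_exp.comp (continuous_const.mul continuous_id)).continuousOn).mul
          ((hxcont.sub continuousOn_const).norm.pow 2)
      · intro u hu
        rw [interior_Icc] at hu
        have hf : HasDerivAt (fun u => x u - xs) (-(g u)) u := (hderiv u hu).sub_const xs
        have hE : HasDerivAt (fun u => Real.exp (c * u)) (Real.exp (c * u) * c) u :=
          (HasDerivAt.exp (by simpa using (hasDerivAt_id u).const_mul c))
        have hN : HasDerivAt (fun u => (inner ℝ (x u - xs) (x u - xs) : ℝ))
            ((inner ℝ (x u - xs) (-(g u)) + inner ℝ (-(g u)) (x u - xs) : ℝ)) u :=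
          hf.inner ℝ hf
        have hmul := hE.mul hN
        simp only [real_inner_self_eq_norm_sq] at hmul
        exact hmul.hasDerivWithinAt
      · intro u hu
        rw [interior_Icc] at hu
        have hinner : (1 - α) * ‖x u - xs‖ ^ 2 ≤ (inner ℝ (g u) (x u - xs) : ℝ) := by
          have h1 : (inner ℝ (g u) (x u - xs) : ℝ) =
              (inner ℝ (x u - xs) (x u - xs) : ℝ) - (inner ℝ (T (x u) - T xs) (x u - xs) : ℝ) := by
            rw [hgsplit u hu.1.le, inner_sub_left]
          have h2 : (inner ℝ (T (x u) - T xs) (x u - xs) : ℝ) ≤ α * ‖x u - xs‖ ^ 2 := by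
            calc (inner ℝ (T (x u) - T xs) (x u - xs) : ℝ)
                ≤ ‖T (x u) - T xs‖ * ‖x u - xs‖ := real_inner_le_norm _ _
              _ ≤ (α * ‖x u - xs‖) * ‖x u - xs‖ :=
                  mul_le_mul_of_nonneg_right (hT (x u) (hxD u hu.1.le) xs hxs) (norm_nonneg _)
              _ = α * ‖x u - xs‖ ^ 2 := by ring
          rw [h1, real_inner_self_eq_norm_sq]
          linarith
        have hpos : 0 < Real.exp (c * u) := Real.exp_pos _
        have hcomm : (inner ℝ (x u - xs) (-(g u)) : ℝ) = -(inner ℝ (g u) (x u - xs) : ℝ) := by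
          rw [inner_neg_right, real_inner_comm]
        have hcomm2 : (inner ℝ (-(g u)) (x u - xs) : ℝ) = -(inner ℝ (g u) (x u - xs) : ℝ) := by
          rw [inner_neg_left]
        rw [hcomm, hcomm2]
        have : Real.exp (c * u) * c * ‖x u - xs‖ ^ 2 +
            Real.exp (c * u) * (-(inner ℝ (g u) (x u - xs) : ℝ) + -(inner ℝ (g u) (x u - xs) : ℝ)) =
            Real.exp (c * u) * (c * ‖x u - xs‖ ^ 2 - 2 * (inner ℝ (g u) (x u - xs) : ℝ)) := by ring
        rw [this]
        have hle : c * ‖x u - xs‖ ^ 2 - 2 * (inner ℝ (g u) (x u - xs) : ℝ) ≤ 0 := by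
          rw [hc_def]; nlinarith
        exact mul_nonpos_of_nonneg_of_nonpos hpos.le hle
    have hmono := hφ (Set.left_mem_Icc.2 hb) (Set.right_mem_Icc.2 hb) hb
    simp only [mul_zero, Real.exp_zero, one_mul, hx0] at hmono
    -- extract the norm inequality
    set A : ℝ := Real.exp ((1 - α) * b) with hA_def
    have hApos : 0 < A := Real.exp_pos _
    have hA2 : Real.exp (c * b) = A ^ 2 := by
      rw [hA_def, sq, ← Real.exp_add, hc_def]; ring_nf
    rw [hA2] at hmono
    have hAn : A * ‖x b - xs‖ ≤ ‖x₀ - xs‖ := by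
      nlinarith [norm_nonneg (x b - xs), norm_nonneg (x₀ - xs),
        mul_nonneg hApos.le (norm_nonneg (x b - xs))]
    have hexp : Real.exp (-(1 - α) * b) = A⁻¹ := by
      rw [hA_def, ← Real.exp_neg]; ring_nf
    rw [hexp]
    calc ‖x b - xs‖ = A⁻¹ * (A * ‖x b - xs‖) := by field_simp
      _ ≤ A⁻¹ * ‖x₀ - xs‖ := mul_le_mul_of_nonneg_left hAn (inv_nonneg.2 hApos.le)
  -- a priori bound on g at integrable times
  have hbd : ∀ s : ℝ, 0 ≤ s → IntervalIntegrable g volume 0 s →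
      ‖g s‖ ≤ (1 + α) * ‖x₀ - xs‖ := by
    intro s hs hi
    have h2 := key s hs hi
    have h3 : Real.exp (-(1 - α) * s) ≤ 1 := by
      rw [Real.exp_le_one_iff]
      nlinarith
    have h4 : ‖x s - xs‖ ≤ ‖x₀ - xs‖ := by
      nlinarith [norm_nonneg (x₀ - xs), Real.exp_pos (-(1 - α) * s)]
    nlinarith [hgb s hs, norm_nonneg (x s - xs)]
  -- bootstrap integrability up to time t
  have hIt : IntervalIntegrable g volume 0 t := by
    set S : Set ℝ := {u | u ∈ Icc (0:ℝ) t ∧ IntervalIntegrable g volume 0 u} with hS_def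
    have h0S : (0:ℝ) ∈ S := ⟨⟨le_rfl, ht⟩, IntervalIntegrable.refl⟩
    have hSne : S.Nonempty := ⟨0, h0S⟩
    have hSbd : BddAbove S := ⟨t, fun u hu => hu.1.2⟩
    set τ : ℝ := sSup S with hτ_def
    have hτ0 : 0 ≤ τ := le_csSup hSbd h0S
    have hτt : τ ≤ t := csSup_le hSne fun u hu => hu.1.2
    have hA : ∀ s : ℝ, 0 ≤ s → s < τ → IntervalIntegrable g volume 0 s := by
      intro s hs hsτ
      obtain ⟨u, huS, hsu⟩ := exists_lt_of_lt_csSup hSne hsτ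
      refine huS.2.mono_set ?_
      rw [uIcc_of_le hs, uIcc_of_le (hs.trans hsu.le)]
      exact Icc_subset_Icc le_rfl hsu.le
    have hout : ∀ v : ℝ, τ < v → v ≤ t → x v = x₀ := by
      intro v hv hvt
      have hv0 : 0 ≤ v := hτ0.trans hv.le
      have hni : ¬ IntervalIntegrable g volume 0 v := fun h =>
        absurd (le_csSup hSbd ⟨⟨hv0, hvt⟩, h⟩) (not_le.2 hv)
      have hxv := hx v hv0
      rwa [intervalIntegral.integral_undef hni, sub_zero] at hxv
    have hgout : ∀ v : ℝ, τ < v → v ≤ t → g v = x₀ - T x₀ := by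
      intro v hv hvt
      rw [hg_def]
      simp only [hout v hv hvt]
    have hgcl : ContinuousOn g (Ico 0 τ) := by
      intro s hs
      have hsτ : s < τ := hs.2
      set u : ℝ := (s + τ) / 2 with hu_def
      have hsu : s < u := by rw [hu_def]; linarith
      have huτ : u < τ := by rw [hu_def]; linarith
      have hu0 : 0 ≤ u := hs.1.trans hsu.le
      have hc := (hcont u hu0 (hA u hu0 huτ)).2
      have hmem : Icc (0:ℝ) u ∈ 𝓝[Ico 0 τ] s :=
        mem_nhdsWithin.2 ⟨Iio u, isOpen_Iio, hsu, fun y hy => ⟨hy.2.1, hy.1.le⟩⟩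
      exact (hc s ⟨hs.1, hsu.le⟩).mono_of_mem_nhdsWithin hmem
    have hne_ae : ∀ᵐ v ∂(volume : Measure ℝ), v ≠ τ := by
      have : (volume : Measure ℝ) {τ} = 0 := measure_singleton τ
      simpa [ae_iff] using this
    have hmeas : AEStronglyMeasurable g (volume.restrict (Ioc 0 t)) := by
      have h1 : AEStronglyMeasurable g (volume.restrict (Ico 0 τ)) :=
        hgcl.aestronglyMeasurable measurableSet_Ico
      have h2 : AEStronglyMeasurable g (volume.restrict (Icc τ t)) := by
        refine (aestronglyMeasurable_const (b := x₀ - T x₀)).congr ?_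
        filter_upwards [ae_restrict_mem measurableSet_Icc, ae_restrict_of_ae hne_ae]
          with v hv hvne
        exact (hgout v (lt_of_le_of_ne hv.1 (Ne.symm hvne)) hv.2).symm
      have h3 : AEStronglyMeasurable g (volume.restrict (Ico 0 τ ∪ Icc τ t)) :=
        aestronglyMeasurable_union_iff.2 ⟨h1, h2⟩
      refine h3.mono_measure (Measure.restrict_mono ?_ le_rfl)
      intro v hv
      rcases lt_or_ge v τ with h | h
      · exact Or.inl ⟨hv.1.le, h⟩
      · exact Or.inr ⟨h, hv.2⟩
    have hM : ∀ᵐ v ∂(volume.restrict (Ioc 0 t)), ‖g v‖ ≤ (1 + α) * ‖x₀ - xs‖ := by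
      filter_upwards [ae_restrict_mem measurableSet_Ioc, ae_restrict_of_ae hne_ae]
        with v hv hvne
      rcases lt_or_gt_of_ne hvne with h | h
      · exact hbd v hv.1.le (hA v hv.1.le h)
      · rw [hgout v h hv.2]
        have := hbd 0 le_rfl IntervalIntegrable.refl
        have hg0 : g 0 = x₀ - T x₀ := by rw [hg_def]; simp [hx0]
        rwa [hg0] at this
    have hint : IntegrableOn g (Ioc 0 t) volume := by
      refine Integrable.mono' (g := fun _ => (1 + α) * ‖x₀ - xs‖) ?_ hmeas hM
      exact integrableOn_const measure_Ioc_lt_top.ne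
    exact (intervalIntegrable_iff_integrableOn_Ioc_of_le ht).2 hint
  exact key t ht hIt
end

section
/- Let U be a nonempty open convex subset of a real Hilbert space H, let f : U → ℝ be convex and Fréchet differentiable on U, and let β > 0. Then ∇f is (1/β)-Lipschitz continuous on U if and only if ∇f is β-cocoercive on U, i.e., ⟨∇f(x) - ∇f(y), x - y⟩ ≥ β‖∇f(x) - ∇f(y)‖² for all x, y ∈ U. -/
open Set

section BaillonHaddadAux

open Metric
open scoped RealInnerProductSpace

variable {H : Type*} [NormedAddCommGroup H] [InnerProductSpace ℝ H] [CompleteSpace H]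

/-- Derivative of `t ↦ f (a + t • v)` from the gradient of `f`. -/
private lemma bh_hasDerivAt_line {f : H → ℝ} {g : H} (a v : H) (t : ℝ)
    (hg : HasGradientAt f g (a + t • v)) :
    HasDerivAt (fun s : ℝ => f (a + s • v)) ⟪g, v⟫ t := by
  have hc : HasDerivAt (fun s : ℝ => a + s • v) v t := by
    simpa using ((hasDerivAt_id t).smul_const v).const_add a
  have := (hg.hasFDerivAt.comp_hasDerivAt t hc)
  simpa [InnerProductSpace.toDual_apply_apply, Function.comp_def] using this

/-- Gradient inequality for convex functions. -/
private lemma bh_grad_ineq {U : Set H} (hUconv : Convex ℝ U) {f : H → ℝ}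
    (hconv : ConvexOn ℝ U f)
    {g x z : H} (hx : x ∈ U) (hz : z ∈ U) (hg : HasGradientAt f g x) :
    f x + ⟪g, z - x⟫ ≤ f z := by
  set v := z - x with hv
  set φ : ℝ → ℝ := fun t => f (x + t • v) with hφ
  have hφconv : ConvexOn ℝ (Icc (0:ℝ) 1) φ := by
    refine ⟨convex_Icc 0 1, ?_⟩
    intro t1 ht1 t2 ht2 p q hp hq hpq
    have h1 : x + (p * t1 + q * t2) • v = p • (x + t1 • v) + q • (x + t2 • v) := by
      match_scalars <;> linarith
    simp only [hφ, smul_eq_mul, h1]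
    exact hconv.2 (hUconv.add_smul_sub_mem hx hz ht1) (hUconv.add_smul_sub_mem hx hz ht2)
      hp hq hpq
  have hd : HasDerivAt φ ⟪g, v⟫ 0 := by
    apply bh_hasDerivAt_line
    simpa using hg
  have := hφconv.le_slope_of_hasDerivAt (by norm_num : (0:ℝ) ∈ Icc (0:ℝ) 1)
    (by norm_num : (1:ℝ) ∈ Icc (0:ℝ) 1) one_pos hd
  have hs : slope φ 0 1 = φ 1 - φ 0 := by simp [slope_def_field]
  have h0 : φ 0 = f x := by simp [hφ]
  have h1 : φ 1 = f z := by simp [hφ, hv]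
  rw [hs, h0, h1] at this
  linarith

/-- Descent lemma along a segment contained in `U`. -/
private lemma bh_descent {U : Set H} {f : H → ℝ} {f' : H → H}
    (hdiff : ∀ x ∈ U, HasGradientAt f (f' x) x) {β : ℝ} (hβ : 0 < β)
    (hlip : ∀ x ∈ U, ∀ y ∈ U, ‖f' x - f' y‖ ≤ (1 / β) * ‖x - y‖)
    {a b : H} (hmem : ∀ t ∈ Icc (0:ℝ) 1, a + t • (b - a) ∈ U) :
    f b ≤ f a + ⟪f' a, b - a⟫ + 1 / (2 * β) * ‖b - a‖ ^ 2 := by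
  set v := b - a with hv
  have ha : a ∈ U := by simpa using hmem 0 (by norm_num)
  set χ : ℝ → ℝ := fun t => f (a + t • v) - t * ⟪f' a, v⟫ - t ^ 2 * (‖v‖ ^ 2 / (2 * β))
    with hχ
  have hd : ∀ t ∈ Icc (0:ℝ) 1, HasDerivAt χ
      (⟪f' (a + t • v), v⟫ - ⟪f' a, v⟫ - 2 * t * (‖v‖ ^ 2 / (2 * β))) t := by
    intro t ht
    have h1 : HasDerivAt (fun s : ℝ => f (a + s • v)) ⟪f' (a + t • v), v⟫ t :=
      bh_hasDerivAt_line a v t (hdiff _ (hmem t ht))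
    have h2 : HasDerivAt (fun s : ℝ => s * ⟪f' a, v⟫) ⟪f' a, v⟫ t := by
      simpa using (hasDerivAt_id t).mul_const ⟪f' a, v⟫
    have h3 : HasDerivAt (fun s : ℝ => s ^ 2 * (‖v‖ ^ 2 / (2 * β)))
        (2 * t * (‖v‖ ^ 2 / (2 * β))) t := by
      simpa [mul_comm] using (hasDerivAt_pow 2 t).mul_const (‖v‖ ^ 2 / (2 * β))
    exact (h1.sub h2).sub h3
  have hcont : ContinuousOn χ (Icc (0:ℝ) 1) := fun t ht =>
    ((hd t ht).continuousAt).continuousWithinAt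
  have hderiv_nonpos : ∀ t ∈ interior (Icc (0:ℝ) 1), deriv χ t ≤ 0 := by
    intro t ht
    rw [interior_Icc] at ht
    have ht' : t ∈ Icc (0:ℝ) 1 := ⟨le_of_lt ht.1, le_of_lt ht.2⟩
    rw [(hd t ht').deriv]
    have hb1 : ⟪f' (a + t • v) - f' a, v⟫ ≤ ‖f' (a + t • v) - f' a‖ * ‖v‖ :=
      real_inner_le_norm _ _
    have hb2 : ‖f' (a + t • v) - f' a‖ ≤ (1 / β) * ‖(a + t • v) - a‖ :=
      hlip _ (hmem t ht') _ ha
    have hb3 : ‖(a + t • v) - a‖ = t * ‖v‖ := by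
      simp [norm_smul, abs_of_nonneg (le_of_lt ht.1)]
    rw [inner_sub_left] at hb1
    rw [hb3] at hb2
    have hv0 : (0:ℝ) ≤ ‖v‖ := norm_nonneg _
    have : ⟪f' (a + t • v), v⟫ - ⟪f' a, v⟫ ≤ (1/β) * (t * ‖v‖) * ‖v‖ := by
      nlinarith [mul_le_mul_of_nonneg_right hb2 hv0]
    have heq : 2 * t * (‖v‖ ^ 2 / (2 * β)) = (1/β) * (t * ‖v‖) * ‖v‖ := by
      field_simp
    linarith [heq ▸ this]
  have hanti : AntitoneOn χ (Icc (0:ℝ) 1) :=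
    antitoneOn_of_deriv_nonpos (convex_Icc 0 1) hcont
      (fun t ht => ((hd t (interior_subset ht)).differentiableAt).differentiableWithinAt)
      hderiv_nonpos
  have := hanti (by norm_num : (0:ℝ) ∈ Icc (0:ℝ) 1) (by norm_num : (1:ℝ) ∈ Icc (0:ℝ) 1)
    zero_le_one
  have h0 : χ 0 = f a := by simp [hχ]
  have h1 : χ 1 = f b - ⟪f' a, v⟫ - ‖v‖ ^ 2 / (2*β) := by simp [hχ, hv]
  rw [h0, h1] at this
  have hr : 1 / (2*β) * ‖v‖^2 = ‖v‖^2/(2*β) := by ring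
  rw [hv] at this ⊢
  linarith [hr]

/-- Strong lower bound when a ball around `y` is inside `U`. -/
private lemma bh_strong_lower {U : Set H} (hUconv : Convex ℝ U) {f : H → ℝ}
    (hconv : ConvexOn ℝ U f)
    {f' : H → H} (hdiff : ∀ x ∈ U, HasGradientAt f (f' x) x) {β : ℝ} (hβ : 0 < β)
    (hlip : ∀ x ∈ U, ∀ y ∈ U, ‖f' x - f' y‖ ≤ (1 / β) * ‖x - y‖)
    {x y : H} (hx : x ∈ U) (hy : y ∈ U) (hball : closedBall y ‖x - y‖ ⊆ U) :
    f x + ⟪f' x, y - x⟫ + β / 2 * ‖f' y - f' x‖ ^ 2 ≤ f y := by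
  set Δ := f' y - f' x with hΔ
  set z := y - β • Δ with hz
  have hΔnorm : β * ‖Δ‖ ≤ ‖x - y‖ := by
    have := hlip y hy x hx
    have h2 : β * ‖f' y - f' x‖ ≤ β * ((1/β) * ‖y - x‖) :=
      mul_le_mul_of_nonneg_left this hβ.le
    rw [norm_sub_rev x y]
    calc β * ‖Δ‖ ≤ β * ((1/β) * ‖y - x‖) := h2
      _ = ‖y - x‖ := by field_simp
  have hmem : ∀ t ∈ Icc (0:ℝ) 1, y + t • (z - y) ∈ U := by
    intro t ht
    apply hball
    rw [mem_closedBall, dist_eq_norm]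
    have : y + t • (z - y) - y = t • (z - y) := by abel
    rw [this, norm_smul]
    have hzy : z - y = -(β • Δ) := by rw [hz]; abel
    rw [hzy, norm_neg, norm_smul, Real.norm_eq_abs, Real.norm_eq_abs,
      abs_of_nonneg ht.1, abs_of_nonneg hβ.le]
    calc t * (β * ‖Δ‖) ≤ 1 * (β * ‖Δ‖) := by
          apply mul_le_mul_of_nonneg_right ht.2; positivity
      _ = β * ‖Δ‖ := by ring
      _ ≤ ‖x - y‖ := hΔnorm
  have hzU : z ∈ U := by simpa using hmem 1 (by norm_num)
  have hdes := bh_descent hdiff hβ hlip hmem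
  have hgr := bh_grad_ineq hUconv hconv hx hzU (hdiff x hx)
  have hzy : z - y = -(β • Δ) := by rw [hz]; abel
  have hzx : z - x = (y - x) - β • Δ := by rw [hz]; abel
  have e1 : ⟪f' y, z - y⟫ = -(β * ⟪f' y, Δ⟫) := by
    rw [hzy, inner_neg_right, real_inner_smul_right]
  have e2 : ⟪f' x, z - x⟫ = ⟪f' x, y - x⟫ - β * ⟪f' x, Δ⟫ := by
    rw [hzx, inner_sub_right, real_inner_smul_right]
  have e3 : ‖z - y‖ ^ 2 = β ^ 2 * ‖Δ‖ ^ 2 := by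
    rw [hzy, norm_neg, norm_smul, Real.norm_eq_abs, abs_of_nonneg hβ.le, mul_pow]
  have e4 : ⟪f' y, Δ⟫ - ⟪f' x, Δ⟫ = ‖Δ‖ ^ 2 := by
    rw [← inner_sub_left, ← hΔ, real_inner_self_eq_norm_sq]
  rw [e1, e3] at hdes
  rw [e2] at hgr
  have e5 : 1 / (2 * β) * (β ^ 2 * ‖Δ‖ ^ 2) = β / 2 * ‖Δ‖ ^ 2 := by
    field_simp
  rw [e5] at hdes
  nlinarith [hdes, hgr, e4]

/-- Local cocoercivity. -/
private lemma bh_local_coco {U : Set H} (hUconv : Convex ℝ U) {f : H → ℝ}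
    (hconv : ConvexOn ℝ U f)
    {f' : H → H} (hdiff : ∀ x ∈ U, HasGradientAt f (f' x) x) {β : ℝ} (hβ : 0 < β)
    (hlip : ∀ x ∈ U, ∀ y ∈ U, ‖f' x - f' y‖ ≤ (1 / β) * ‖x - y‖)
    {x y : H} (hx : x ∈ U) (hy : y ∈ U)
    (hballx : closedBall x ‖x - y‖ ⊆ U) (hbally : closedBall y ‖x - y‖ ⊆ U) :
    β * ‖f' x - f' y‖ ^ 2 ≤ ⟪f' x - f' y, x - y⟫ := by
  have h1 := bh_strong_lower hUconv hconv hdiff hβ hlip hx hy hbally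
  have h2 := bh_strong_lower hUconv hconv hdiff hβ hlip hy hx
    (by rwa [norm_sub_rev] at hballx)
  have e1 : ‖f' y - f' x‖ = ‖f' x - f' y‖ := norm_sub_rev _ _
  have e2 : ⟪f' x - f' y, x - y⟫ = -⟪f' x, y - x⟫ - ⟪f' y, x - y⟫ := by
    rw [inner_sub_left]
    have : (x - y : H) = -(y - x) := by abel
    rw [this, inner_neg_right]
  rw [e1] at h1
  nlinarith [h1, h2, e2]

/-- Local nonexpansiveness of `I - 2β ∇f`. -/
private lemma bh_local_nonexp {U : Set H} (hUconv : Convex ℝ U) {f : H → ℝ}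
    (hconv : ConvexOn ℝ U f)
    {f' : H → H} (hdiff : ∀ x ∈ U, HasGradientAt f (f' x) x) {β : ℝ} (hβ : 0 < β)
    (hlip : ∀ x ∈ U, ∀ y ∈ U, ‖f' x - f' y‖ ≤ (1 / β) * ‖x - y‖)
    {x y : H} (hx : x ∈ U) (hy : y ∈ U)
    (hballx : closedBall x ‖x - y‖ ⊆ U) (hbally : closedBall y ‖x - y‖ ⊆ U) :
    ‖(x - (2*β) • f' x) - (y - (2*β) • f' y)‖ ≤ ‖x - y‖ := by
  have hco := bh_local_coco hUconv hconv hdiff hβ hlip hx hy hballx hbally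
  have he : (x - (2*β) • f' x) - (y - (2*β) • f' y) = (x - y) - (2*β) • (f' x - f' y) := by
    rw [smul_sub]; abel
  rw [he]
  have hsq : ‖(x - y) - (2*β) • (f' x - f' y)‖ ^ 2 ≤ ‖x - y‖ ^ 2 := by
    rw [norm_sub_sq_real, real_inner_smul_right, norm_smul, Real.norm_eq_abs,
      abs_of_nonneg (by positivity : (0:ℝ) ≤ 2*β), mul_pow, real_inner_comm]
    nlinarith [hco]
  calc ‖(x - y) - (2*β) • (f' x - f' y)‖
      = Real.sqrt (‖(x - y) - (2*β) • (f' x - f' y)‖ ^ 2) := by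
        rw [Real.sqrt_sq (norm_nonneg _)]
    _ ≤ Real.sqrt (‖x - y‖ ^ 2) := Real.sqrt_le_sqrt hsq
    _ = ‖x - y‖ := Real.sqrt_sq (norm_nonneg _)

/-- Global nonexpansiveness of `I - 2β ∇f` by chaining along segments. -/
private lemma bh_global_nonexp {U : Set H} (hUo : IsOpen U) (hUconv : Convex ℝ U)
    {f : H → ℝ} (hconv : ConvexOn ℝ U f)
    {f' : H → H} (hdiff : ∀ x ∈ U, HasGradientAt f (f' x) x) {β : ℝ} (hβ : 0 < β)
    (hlip : ∀ x ∈ U, ∀ y ∈ U, ‖f' x - f' y‖ ≤ (1 / β) * ‖x - y‖)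
    {x y : H} (hx : x ∈ U) (hy : y ∈ U) :
    ‖(x - (2*β) • f' x) - (y - (2*β) • f' y)‖ ≤ ‖x - y‖ := by
  rcases eq_or_ne x y with rfl | hxy
  · simp
  have hnorm : 0 < ‖x - y‖ := by
    rw [norm_pos_iff, sub_ne_zero]; exact hxy
  have hseg : segment ℝ x y ⊆ U := hUconv.segment_subset hx hy
  have hcpt : IsCompact (segment ℝ x y) := by
    rw [segment_eq_image']
    exact isCompact_Icc.image (continuous_const.add (continuous_id.smul continuous_const))
  obtain ⟨ε, hε, hthick⟩ := hcpt.exists_cthickening_subset_open hUo hseg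
  obtain ⟨n, hn⟩ := exists_nat_ge (‖x - y‖ / ε)
  have hn0 : 0 < n := by
    by_contra h
    push_neg at h
    interval_cases n
    · simp at hn
      have : 0 < ‖x - y‖ / ε := div_pos hnorm hε
      linarith
  have hnR : (0:ℝ) < n := Nat.cast_pos.mpr hn0
  set r : ℝ := ‖x - y‖ / n with hr
  have hrε : r ≤ ε := by
    rw [hr, div_le_iff₀ hnR]
    rw [div_le_iff₀ hε] at hn
    linarith [mul_comm ε (n:ℝ) ▸ hn]
  have hrpos : 0 < r := div_pos hnorm hnR
  set p : ℕ → H := fun i => x + (((min i n : ℕ) : ℝ) / n) • (y - x) with hp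
  have hpseg : ∀ i, p i ∈ segment ℝ x y := by
    intro i
    rw [segment_eq_image']
    refine ⟨((min i n : ℕ) : ℝ) / n, ⟨by positivity, ?_⟩, rfl⟩
    rw [div_le_one hnR]
    exact_mod_cast Nat.cast_le.mpr (min_le_right i n)
  have hpU : ∀ i, p i ∈ U := fun i => hseg (hpseg i)
  have hball : ∀ i (ρ : ℝ), ρ ≤ ε → closedBall (p i) ρ ⊆ U := by
    intro i ρ hρ w hw
    exact hthick (mem_cthickening_of_dist_le w (p i) ε _ (hpseg i)
      (le_trans (mem_closedBall.mp hw) hρ))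
  have hstep : ∀ i < n, ‖p i - p (i+1)‖ = r := by
    intro i hi
    have h1 : min i n = i := min_eq_left hi.le
    have h2 : min (i+1) n = i+1 := min_eq_left hi
    have : p i - p (i+1) = (((i:ℝ))/n - ((i:ℝ)+1)/n) • (y - x) := by
      rw [hp]
      simp only [h1, h2]
      push_cast
      rw [smul_sub, smul_sub]
      module
    rw [this, norm_smul, Real.norm_eq_abs]
    have : ((i:ℝ))/n - ((i:ℝ)+1)/n = -(1/n) := by field_simp; ring
    rw [this, abs_neg, abs_of_nonneg (by positivity : (0:ℝ) ≤ 1/n), hr,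
      norm_sub_rev y x]
    field_simp
  set T : H → H := fun z => z - (2*β) • f' z with hT
  have hchain : dist (T (p 0)) (T (p n)) ≤ ∑ i ∈ Finset.range n, dist (T (p i)) (T (p (i+1))) :=
    dist_le_range_sum_dist (fun i => T (p i)) n
  have hbound : ∀ i ∈ Finset.range n, dist (T (p i)) (T (p (i+1))) ≤ r := by
    intro i hi
    rw [Finset.mem_range] at hi
    have hst := hstep i hi
    have hb1 : closedBall (p i) ‖p i - p (i+1)‖ ⊆ U := hst ▸ hball i r hrε
    have hb2 : closedBall (p (i+1)) ‖p i - p (i+1)‖ ⊆ U := hst ▸ hball (i+1) r hrε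
    have := bh_local_nonexp hUconv hconv hdiff hβ hlip (hpU i) (hpU (i+1)) hb1 hb2
    rw [dist_eq_norm]
    calc ‖T (p i) - T (p (i+1))‖ ≤ ‖p i - p (i+1)‖ := this
      _ = r := hst
  have hsum : ∑ i ∈ Finset.range n, dist (T (p i)) (T (p (i+1))) ≤ n * r :=
    le_trans (Finset.sum_le_sum hbound) (by rw [Finset.sum_const, Finset.card_range]; simp)
  have hp0 : p 0 = x := by simp [hp]
  have hpn : p n = y := by
    rw [hp]
    simp only [min_self]
    rw [div_self (ne_of_gt hnR), one_smul]
    abel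
  have hnr : (n:ℝ) * r = ‖x - y‖ := by
    rw [hr]; field_simp
  rw [hp0, hpn] at hchain
  have hfin : dist (T x) (T y) ≤ (n:ℝ) * r := le_trans hchain hsum
  rw [hnr] at hfin
  simpa [hT, dist_eq_norm] using hfin

end BaillonHaddadAux

theorem stmt_13
    {H : Type*} [NormedAddCommGroup H] [InnerProductSpace ℝ H] [CompleteSpace H]
    (U : Set H) (hU : U.Nonempty) (hUo : IsOpen U) (hUconv : Convex ℝ U)
    (f : H → ℝ) (hconv : ConvexOn ℝ U f)
    (f' : H → H) (hdiff : ∀ x ∈ U, HasGradientAt f (f' x) x)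
    (β : ℝ) (hβ : 0 < β) :
    (∀ x ∈ U, ∀ y ∈ U, ‖f' x - f' y‖ ≤ (1 / β) * ‖x - y‖) ↔
    (∀ x ∈ U, ∀ y ∈ U, β * ‖f' x - f' y‖ ^ 2 ≤ inner ℝ (f' x - f' y) (x - y)) := by
  constructor
  · intro hlip x hx y hy
    have hne := bh_global_nonexp hUo hUconv hconv hdiff hβ hlip hx hy
    have he : (x - (2*β) • f' x) - (y - (2*β) • f' y)
        = (x - y) - (2*β) • (f' x - f' y) := by
      rw [smul_sub]; abel
    rw [he] at hne
    have hsq : ‖(x - y) - (2*β) • (f' x - f' y)‖ ^ 2 ≤ ‖x - y‖ ^ 2 :=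
      pow_le_pow_left₀ (norm_nonneg _) hne 2
    rw [norm_sub_sq_real, real_inner_smul_right, norm_smul, Real.norm_eq_abs,
      abs_of_nonneg (by positivity : (0:ℝ) ≤ 2*β), mul_pow, real_inner_comm] at hsq
    nlinarith [hsq, hβ]
  · intro hco x hx y hy
    have h := hco x hx y hy
    have hcs : (inner ℝ (f' x - f' y) (x - y) : ℝ) ≤ ‖f' x - f' y‖ * ‖x - y‖ :=
      real_inner_le_norm _ _
    rcases eq_or_lt_of_le (norm_nonneg (f' x - f' y)) with h0 | h0
    · rw [← h0]
      positivity
    · have h1 : β * ‖f' x - f' y‖ ^ 2 ≤ ‖f' x - f' y‖ * ‖x - y‖ := le_trans h hcs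
      rw [div_mul_eq_mul_div, le_div_iff₀ hβ, mul_comm]
      nlinarith [h1, h0]
end

section
/- Let C₁, C₂ be nonempty closed convex subsets of a real Hilbert space H. Then for every z ∈ H: ‖proj_{C₁}(z) - proj_{C₂}(z)‖² ≤ 2·(d_{C₁}(z) + d_{C₂}(z))·Haus(C₁, C₂), where Haus denotes the Hausdorff distance. -/
open Set Metric InnerProductSpace

theorem stmt_15
    {H : Type*} [NormedAddCommGroup H] [InnerProductSpace ℝ H] [CompleteSpace H]
    (C₁ C₂ : Set H)
    (h1 : C₁.Nonempty) (h1c : IsClosed C₁) (h1conv : Convex ℝ C₁)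
    (h2 : C₂.Nonempty) (h2c : IsClosed C₂) (h2conv : Convex ℝ C₂)
    (hfin : EMetric.hausdorffEdist C₁ C₂ ≠ ⊤)
    (p₁ p₂ : H → H)
    (hp₁S : ∀ z, p₁ z ∈ C₁) (hp₁ : ∀ z, ‖z - p₁ z‖ = infDist z C₁)
    (hp₂S : ∀ z, p₂ z ∈ C₂) (hp₂ : ∀ z, ‖z - p₂ z‖ = infDist z C₂)
    (z : H) :
    ‖p₁ z - p₂ z‖ ^ 2 ≤ 2 * (infDist z C₁ + infDist z C₂) * hausdorffDist C₁ C₂ := by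
  set u := p₁ z
  set v := p₂ z
  have hinf1 : ∀ w : H, ‖w - p₁ w‖ = ⨅ x : C₁, ‖w - x‖ := by
    intro w
    rw [hp₁ w, infDist_eq_iInf]
    simp_rw [dist_eq_norm]
  have hinf2 : ∀ w : H, ‖w - p₂ w‖ = ⨅ x : C₂, ‖w - x‖ := by
    intro w
    rw [hp₂ w, infDist_eq_iInf]
    simp_rw [dist_eq_norm]
  have hchar1 : ∀ w ∈ C₁, ⟪z - u, w - u⟫_ℝ ≤ 0 :=
    (norm_eq_iInf_iff_real_inner_le_zero h1conv (hp₁S z)).mp (hinf1 z)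
  have hchar2 : ∀ w ∈ C₂, ⟪z - v, w - v⟫_ℝ ≤ 0 :=
    (norm_eq_iInf_iff_real_inner_le_zero h2conv (hp₂S z)).mp (hinf2 z)
  -- nearest point of C₁ to v
  obtain ⟨x, hxC, hx⟩ := exists_norm_eq_iInf_of_complete_convex h1 h1c.isComplete h1conv v
  obtain ⟨y, hyC, hy⟩ := exists_norm_eq_iInf_of_complete_convex h2 h2c.isComplete h2conv u
  have hHnn : 0 ≤ hausdorffDist C₁ C₂ := hausdorffDist_nonneg
  have hxd : ‖v - x‖ ≤ hausdorffDist C₁ C₂ := by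
    rw [hx]
    simp_rw [← dist_eq_norm]
    rw [← infDist_eq_iInf, hausdorffDist_comm]
    exact infDist_le_hausdorffDist_of_mem (hp₂S z) (by rw [EMetric.hausdorffEdist_comm]; exact hfin)
  have hyd : ‖u - y‖ ≤ hausdorffDist C₁ C₂ := by
    rw [hy]
    simp_rw [← dist_eq_norm]
    rw [← infDist_eq_iInf]
    exact infDist_le_hausdorffDist_of_mem (hp₁S z) hfin
  have hd1 : ‖z - u‖ = infDist z C₁ := hp₁ z
  have hd2 : ‖z - v‖ = infDist z C₂ := hp₂ z
  have key : ‖u - v‖ ^ 2 ≤ (infDist z C₁ + infDist z C₂) * hausdorffDist C₁ C₂ := by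
    have hsplit : ‖u - v‖ ^ 2 = ⟪u - z, u - v⟫_ℝ + ⟪z - v, u - v⟫_ℝ := by
      rw [← inner_add_left]
      have : (u - z) + (z - v) = u - v := by abel
      rw [this, real_inner_self_eq_norm_sq]
    have h1' : ⟪u - z, u - v⟫_ℝ ≤ infDist z C₁ * hausdorffDist C₁ C₂ := by
      have e1 : ⟪u - z, u - v⟫_ℝ = ⟪z - u, x - u⟫_ℝ + ⟪u - z, x - v⟫_ℝ := by
        have : ⟪z - u, x - u⟫_ℝ = ⟪u - z, u - x⟫_ℝ := by
          rw [← inner_neg_neg]; congr 1 <;> abel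
        rw [this, ← inner_add_right]
        congr 1; abel
      rw [e1]
      have := hchar1 x hxC
      have hcs : ⟪u - z, x - v⟫_ℝ ≤ ‖u - z‖ * ‖x - v‖ := real_inner_le_norm _ _
      have : ⟪u - z, x - v⟫_ℝ ≤ infDist z C₁ * hausdorffDist C₁ C₂ := by
        calc ⟪u - z, x - v⟫_ℝ ≤ ‖u - z‖ * ‖x - v‖ := hcs
          _ ≤ infDist z C₁ * hausdorffDist C₁ C₂ := by
              rw [norm_sub_rev u z, hd1, norm_sub_rev x v]
              exact mul_le_mul_of_nonneg_left hxd (infDist_nonneg)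
      linarith [hchar1 x hxC]
    have h2' : ⟪z - v, u - v⟫_ℝ ≤ infDist z C₂ * hausdorffDist C₁ C₂ := by
      have e2 : ⟪z - v, u - v⟫_ℝ = ⟪z - v, y - v⟫_ℝ + ⟪v - z, y - u⟫_ℝ := by
        have : ⟪v - z, y - u⟫_ℝ = ⟪z - v, u - y⟫_ℝ := by
          rw [← inner_neg_neg]; congr 1 <;> abel
        rw [this, ← inner_add_right]
        congr 1; abel
      rw [e2]
      have hcs : ⟪v - z, y - u⟫_ℝ ≤ ‖v - z‖ * ‖y - u‖ := real_inner_le_norm _ _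
      have : ⟪v - z, y - u⟫_ℝ ≤ infDist z C₂ * hausdorffDist C₁ C₂ := by
        calc ⟪v - z, y - u⟫_ℝ ≤ ‖v - z‖ * ‖y - u‖ := hcs
          _ ≤ infDist z C₂ * hausdorffDist C₁ C₂ := by
              rw [norm_sub_rev v z, hd2, norm_sub_rev y u]
              exact mul_le_mul_of_nonneg_left hyd (infDist_nonneg)
      linarith [hchar2 y hyC]
    linarith [hsplit]
  have hnn : 0 ≤ (infDist z C₁ + infDist z C₂) * hausdorffDist C₁ C₂ :=
    mul_nonneg (add_nonneg infDist_nonneg infDist_nonneg) hHnn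
  linarith
end

section
/- Let ε : [0, ∞) → (0, ∞) be locally integrable with ∫₀^∞ ε(s) ds = +∞, and let ψ : [0, ∞) → [0, ∞) be locally integrable with ψ(t)/ε(t) → 0 as t → ∞. If φ : [0, ∞) → [0, ∞) is locally absolutely continuous and satisfies φ'(t) + ε(t)φ(t) ≤ ψ(t) for a.e. t ≥ 0, then φ(t) → 0 as t → ∞. -/
open Set MeasureTheory

theorem stmt_16
    (ε ψ φ g : ℝ → ℝ)
    (hεpos : ∀ t ≥ (0:ℝ), 0 < ε t)
    (hεint : LocallyIntegrableOn ε (Set.Ici (0:ℝ)))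
    (hεdiv : Filter.Tendsto (fun t => ∫ s in (0:ℝ)..t, ε s) Filter.atTop Filter.atTop)
    (hψpos : ∀ t ≥ (0:ℝ), 0 ≤ ψ t)
    (hψint : LocallyIntegrableOn ψ (Set.Ici (0:ℝ)))
    (hψε : Filter.Tendsto (fun t => ψ t / ε t) Filter.atTop (nhds 0))
    (hφpos : ∀ t ≥ (0:ℝ), 0 ≤ φ t)
    (hφAC : ∀ t ≥ (0:ℝ), φ t = φ 0 + ∫ s in (0:ℝ)..t, g s)
    (hgint : LocallyIntegrableOn g (Set.Ici (0:ℝ)))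
    (hineq : ∀ᵐ t ∂(volume.restrict (Set.Ici (0:ℝ))), g t + ε t * φ t ≤ ψ t) :
    Filter.Tendsto φ Filter.atTop (nhds 0) := by
  -- interval integrability of locally integrable functions
  have hII : ∀ (f : ℝ → ℝ), LocallyIntegrableOn f (Set.Ici (0:ℝ)) →
      ∀ a b : ℝ, 0 ≤ a → a ≤ b → IntervalIntegrable f volume a b := by
    intro f hf a b ha hab
    rw [intervalIntegrable_iff_integrableOn_Ioc_of_le hab]
    exact (hf.integrableOn_compact_subset
      (fun x hx => ha.trans hx.1) isCompact_Icc).mono_set Ioc_subset_Icc_self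
  -- continuity of φ on [0, b]
  have hφcont : ∀ b : ℝ, 0 ≤ b → ContinuousOn φ (Icc 0 b) := by
    intro b hb
    have h1 : ContinuousOn (fun x => φ 0 + ∫ s in (0:ℝ)..x, g s) (Icc 0 b) := by
      apply continuousOn_const.add
      have h2 : IntegrableOn g (uIcc (0:ℝ) b) volume := by
        rw [uIcc_of_le hb]
        exact hgint.integrableOn_compact_subset (fun x hx => hx.1) isCompact_Icc
      have := intervalIntegral.continuousOn_primitive_interval (f := g) (μ := volume) h2
      rwa [uIcc_of_le hb] at this
    exact h1.congr fun x hx => hφAC x hx.1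
  -- interval integrability of ε * (c - φ)
  have hεφII : ∀ (c : ℝ) (a b : ℝ), 0 ≤ a → a ≤ b →
      IntervalIntegrable (fun s => ε s * (c - φ s)) volume a b := by
    intro c a b ha hab
    rw [intervalIntegrable_iff_integrableOn_Ioc_of_le hab]
    have hb : (0:ℝ) ≤ b := ha.trans hab
    have hφc : ContinuousOn (fun s => c - φ s) (Icc a b) :=
      (continuousOn_const.sub (hφcont b hb)).mono (Icc_subset_Icc ha le_rfl)
    obtain ⟨C, hC⟩ := isCompact_Icc.exists_bound_of_continuousOn hφc
    have hεInt : IntegrableOn ε (Ioc a b) volume :=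
      (hεint.integrableOn_compact_subset (fun x hx => ha.trans hx.1)
        isCompact_Icc).mono_set Ioc_subset_Icc_self
    refine Integrable.mono' (hεInt.norm.const_mul C) ?_ ?_
    · exact hεInt.aestronglyMeasurable.mul
        ((hφc.mono Ioc_subset_Icc_self).aestronglyMeasurable measurableSet_Ioc)
    · filter_upwards [ae_restrict_mem measurableSet_Ioc] with s hs
      have h1 := hC s (Ioc_subset_Icc_self hs)
      have h2 : ‖ε s * (c - φ s)‖ = ‖c - φ s‖ * ‖ε s‖ := by
        rw [norm_mul]; ring
      rw [h2]
      exact mul_le_mul_of_nonneg_right h1 (norm_nonneg _)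
  -- main quantitative claim
  have key : ∀ η : ℝ, 0 < η → ∃ N, 0 ≤ N ∧ ∀ t ≥ N, φ t ≤ η := by
    intro η hη
    set δ := η / 2 with hδdef
    have hδ : 0 < δ := by positivity
    have hδη : δ < η := by rw [hδdef]; linarith
    obtain ⟨T, hT⟩ := Filter.eventually_atTop.mp (hψε.eventually_lt_const hδ)
    set T' := max T 0 with hT'def
    have hT'0 : (0:ℝ) ≤ T' := le_max_right _ _
    have hψδ : ∀ s, T' ≤ s → ψ s ≤ δ * ε s := by
      intro s hs
      have hs0 : (0:ℝ) ≤ s := hT'0.trans hs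
      have h1 := hT s ((le_max_left T 0).trans hs)
      have h2 := hεpos s hs0
      rw [div_lt_iff₀ h2] at h1
      linarith
    -- Gronwall-type step inequality
    have hstep : ∀ a b : ℝ, T' ≤ a → a ≤ b →
        φ b ≤ φ a + ∫ s in a..b, ε s * (δ - φ s) := by
      intro a b haT hab
      have ha0 : 0 ≤ a := hT'0.trans haT
      have hb0 : 0 ≤ b := ha0.trans hab
      have hdiff : φ b - φ a = ∫ s in a..b, g s := by
        have h1 := hII g hgint 0 b le_rfl hb0
        have h2 := hII g hgint 0 a le_rfl ha0
        rw [hφAC b hb0, hφAC a ha0]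
        have h3 := intervalIntegral.integral_interval_sub_left h1 h2
        linarith
      have hmono : (∫ s in a..b, g s) ≤ ∫ s in a..b, ε s * (δ - φ s) := by
        refine intervalIntegral.integral_mono_ae_restrict hab (hII g hgint a b ha0 hab)
          (hεφII δ a b ha0 hab) ?_
        have h1 : ∀ᵐ s ∂(volume.restrict (Icc a b)), g s + ε s * φ s ≤ ψ s :=
          ae_restrict_of_ae_restrict_of_subset (fun x hx => ha0.trans hx.1) hineq
        filter_upwards [h1, ae_restrict_mem measurableSet_Icc] with s hs1 hs2
        have h3 : ψ s ≤ δ * ε s := hψδ s (haT.trans hs2.1)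
        have h4 : ε s * (δ - φ s) = δ * ε s - ε s * φ s := by ring
        linarith
      linarith
    -- there is a time beyond T' where φ is at most η
    have hex : ∃ t₀, T' ≤ t₀ ∧ φ t₀ ≤ η := by
      by_contra hcon
      push_neg at hcon
      have hcontra : ∀ b, T' ≤ b →
          (∫ s in (0:ℝ)..b, ε s) ≤ (∫ s in (0:ℝ)..T', ε s) + φ T' / (η - δ) := by
        intro b hb
        have hb0 : 0 ≤ b := hT'0.trans hb
        have h1 := hstep T' b le_rfl hb
        have hm : (∫ s in T'..b, ε s * (δ - φ s)) ≤ ∫ s in T'..b, ε s * (δ - η) := by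
          refine intervalIntegral.integral_mono_on hb (hεφII δ T' b hT'0 hb)
            ((hII ε hεint T' b hT'0 hb).mul_const _) ?_
          intro s hs
          have hs0 : 0 ≤ s := hT'0.trans hs.1
          have h2 : η < φ s := hcon s hs.1
          exact mul_le_mul_of_nonneg_left (by linarith) (hεpos s hs0).le
        rw [intervalIntegral.integral_mul_const] at hm
        have hφb := hφpos b hb0
        have hsplit := intervalIntegral.integral_add_adjacent_intervals
          (hII ε hεint 0 T' le_rfl hT'0) (hII ε hεint T' b hT'0 hb)
        have hkey : (∫ s in T'..b, ε s) ≤ φ T' / (η - δ) := by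
          rw [le_div_iff₀ (by linarith : (0:ℝ) < η - δ)]
          have h5 : (∫ s in T'..b, ε s) * (η - δ) = -((∫ s in T'..b, ε s) * (δ - η)) := by
            ring
          linarith
        linarith
      obtain ⟨b, hb1, hb2⟩ := ((hεdiv.eventually_gt_atTop
        ((∫ s in (0:ℝ)..T', ε s) + φ T' / (η - δ))).and
        (Filter.eventually_ge_atTop T')).exists
      exact absurd (hcontra b hb2) (not_le.mpr hb1)
    obtain ⟨t₀, ht₀T, ht₀⟩ := hex
    refine ⟨t₀, hT'0.trans ht₀T, ?_⟩
    intro t ht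
    by_contra hgt
    push_neg at hgt
    have ht₀0 : (0:ℝ) ≤ t₀ := hT'0.trans ht₀T
    have ht0 : (0:ℝ) ≤ t := ht₀0.trans ht
    -- the set of times in [t₀, t] where φ ≤ η
    set S : Set ℝ := Icc t₀ t ∩ φ ⁻¹' (Iic η) with hSdef
    have hScl : IsClosed S := by
      refine ContinuousOn.preimage_isClosed_of_isClosed
        ((hφcont t ht0).mono (Icc_subset_Icc ht₀0 le_rfl)) isClosed_Icc isClosed_Iic
    have hScomp : IsCompact S := isCompact_Icc.of_isClosed_subset hScl inter_subset_left
    have hSne : S.Nonempty := ⟨t₀, ⟨le_rfl, ht⟩, ht₀⟩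
    set t₁ := sSup S with ht₁def
    have ht₁S : t₁ ∈ S := hScomp.sSup_mem hSne
    have ht₁t : t₁ ≤ t := ht₁S.1.2
    have ht₀t₁ : t₀ ≤ t₁ := ht₁S.1.1
    have hφt₁ : φ t₁ ≤ η := ht₁S.2
    have h1 := hstep t₁ t (ht₀T.trans ht₀t₁) ht₁t
    have hint0 : (∫ s in t₁..t, ε s * (δ - φ s)) ≤ 0 := by
      have hI0 : IntervalIntegrable (fun _ : ℝ => (0:ℝ)) volume t₁ t :=
        intervalIntegrable_const
      have := intervalIntegral.integral_mono_ae_restrict ht₁t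
        (hεφII δ t₁ t (hT'0.trans (ht₀T.trans ht₀t₁)) ht₁t) hI0 ?_
      · simpa using this
      · have hsing : (volume.restrict (Icc t₁ t)) {t₁} = 0 := by
          refine le_antisymm ?_ (zero_le)
          calc (volume.restrict (Icc t₁ t)) {t₁} ≤ volume {t₁} :=
                Measure.restrict_le_self _
            _ = 0 := Real.volume_singleton
        have hne : ∀ᵐ s ∂(volume.restrict (Icc t₁ t)), s ≠ t₁ := by
          rw [ae_iff]
          convert hsing using 2
          ext s; simp [eq_comm]
        filter_upwards [ae_restrict_mem measurableSet_Icc, hne] with s hs hsne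
        have hst₁ : t₁ < s := lt_of_le_of_ne hs.1 (Ne.symm hsne)
        have hs0 : (0:ℝ) ≤ s := (hT'0.trans (ht₀T.trans ht₀t₁)).trans hs.1
        have hφs : η < φ s := by
          by_contra hle
          push_neg at hle
          have hsS : s ∈ S := ⟨⟨ht₀t₁.trans hs.1, hs.2⟩, hle⟩
          exact absurd (le_csSup hScomp.bddAbove hsS) (not_le.mpr hst₁)
        have : ε s * (δ - φ s) ≤ 0 :=
          mul_nonpos_of_nonneg_of_nonpos (hεpos s hs0).le (by linarith)
        simpa using this
    linarith
  -- conclude convergence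
  rw [Metric.tendsto_atTop]
  intro η hη
  obtain ⟨N, hN0, hN⟩ := key (η / 2) (by positivity)
  refine ⟨N, fun t ht => ?_⟩
  have h0t : (0:ℝ) ≤ t := hN0.trans ht
  rw [Real.dist_eq, sub_zero, abs_of_nonneg (hφpos t h0t)]
  exact lt_of_le_of_lt (hN t ht) (by linarith)
end
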